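/- arXiv:1810.00548 — 2 statements merged into one kernel-verified Lean document; each statement's English description precedes it below -/
import Mathlib

section
/- Let * be the backwards Laver operation on nonnegative integers and π(p) its period (the smallest power of 2 that is a period of q ↦ p * q). For any p and any k with 2^k < π(p), there exists l ≥ k such that p * 2^k = 2^l. -/
def LaverAxioms (N : ℕ) (star : ℕ → ℕ → ℕ) : Prop :=
  (∀ p q, p ∈ Set.Icc 1 N → q ∈ Set.Icc 1 N → star p q ∈ Set.Icc 1 N) ∧
  (∀ p ∈ Set.Icc 1 N, star p 1 = p % N + 1) ∧
  (∀ p q, p ∈ Set.Icc 1 N → q ∈ Set.Icc 1 N →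
    star p (star q 1) = star (star p q) (star p 1))

/-- `bstar` is the backwards Laver operation:
p * q = 2^n - ((2^n - p) ⋆ₙ (2^n - q)) for any n with p, q < 2^n. -/
def IsBackLaver (bstar : ℕ → ℕ → ℕ) : Prop :=
  ∀ n (star : ℕ → ℕ → ℕ), LaverAxioms (2 ^ n) star →
    ∀ p q, p < 2 ^ n → q < 2 ^ n →
      bstar p q = 2 ^ n - star (2 ^ n - p) (2 ^ n - q)



def lrow (t : ℕ → ℕ → ℕ) (p : ℕ) : ℕ → ℕ
  | 0 => 0
  | 1 => p + 1
  | q + 2 => t (lrow t p (q + 1)) (p + 1)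

def ltbl (N : ℕ) : ℕ → ℕ → ℕ → ℕ
  | 0 => fun _ q => q
  | k + 1 => fun p q => if p = N - (k + 1) then lrow (ltbl N k) p q else ltbl N k p q

def lav (N : ℕ) : ℕ → ℕ → ℕ := ltbl N (N - 1)

lemma ltbl_mono (N : ℕ) : ∀ k j, j ≤ k → ∀ p q, 1 ≤ p → N - j ≤ p →
    ltbl N k p q = ltbl N j p q := by
  intro k
  induction k with
  | zero => intro j hj p q _ _; interval_cases j; rfl
  | succ k ih =>
    intro j hj p q h1 h2
    rcases Nat.eq_or_lt_of_le hj with h | h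
    · rw [h]
    · have hj' : j ≤ k := by omega
      show (if p = N - (k+1) then lrow (ltbl N k) p q else ltbl N k p q) = _
      rw [if_neg (by omega), ih j hj' p q h1 h2]

lemma lav_row_eq (N p : ℕ) (h1 : 1 ≤ p) (h2 : p < N) (q : ℕ) :
    lav N p q = lrow (ltbl N (N - p - 1)) p q := by
  have e1 : lav N p q = ltbl N (N - p) p q := by
    unfold lav
    exact ltbl_mono N (N-1) (N-p) (by omega) p q h1 (by omega)
  have e2 : N - p = (N - p - 1) + 1 := by omega
  rw [e1, e2]
  show (if p = N - ((N-p-1)+1) then lrow (ltbl N (N-p-1)) p q else _) = _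
  rw [if_pos (by omega)]
  all_goals first
  | rfl
  | (congr 2 <;> omega)

lemma ltbl_lav (N j p q : ℕ) (hj : j ≤ N - 1) (h1 : 1 ≤ p) (h2 : N - j ≤ p) :
    ltbl N j p q = lav N p q :=
  (ltbl_mono N (N-1) j hj p q h1 h2).symm

lemma lav_N (N : ℕ) (hN : 1 ≤ N) (q : ℕ) : lav N N q = q := by
  unfold lav
  generalize N - 1 = k
  induction k with
  | zero => rfl
  | succ k ih =>
    show (if N = N - (k+1) then lrow (ltbl N k) N q else ltbl N k N q) = q
    rw [if_neg (by omega), ih]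

lemma lav_one (N p : ℕ) (h1 : 1 ≤ p) (h2 : p < N) : lav N p 1 = p + 1 := by
  rw [lav_row_eq N p h1 h2]; rfl

lemma lav_bounds (N : ℕ) : ∀ m p, N - p = m → 1 ≤ p → p < N →
    ∀ q, 1 ≤ q → q ≤ N → p < lav N p q ∧ lav N p q ≤ N := by
  intro m
  induction m using Nat.strong_induction_on with
  | _ m ih =>
    intro p hm h1 h2 q hq1 hq2
    induction q with
    | zero => omega
    | succ q ihq =>
      rcases Nat.eq_or_lt_of_le hq1 with hq | hq
      · rw [← hq, lav_one N p h1 h2]; omega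
      · -- q ≥ 1, q+1 ≤ N
        have hq1' : 1 ≤ q := by omega
        have hqN : q ≤ N := by omega
        obtain ⟨hb1, hb2⟩ := ihq hq1' hqN
        set r := lav N p q with hr
        -- lav N p (q+1) = lav N r (p+1)
        have hrow : lav N p (q+1) = ltbl N (N - p - 1) r (p+1) := by
          rw [lav_row_eq N p h1 h2]
          obtain ⟨q', rfl⟩ : ∃ q', q = q' + 1 := ⟨q - 1, by omega⟩
          show ltbl N (N-p-1) (lrow (ltbl N (N-p-1)) p (q'+1)) (p+1) = _
          rw [← lav_row_eq N p h1 h2]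
        rw [hrow, ltbl_lav N (N-p-1) r (p+1) (by omega) (by omega) (by omega)]
        rcases Nat.eq_or_lt_of_le hb2 with hrN | hrN
        · rw [hrN, lav_N N (by omega) (p+1)]; omega
        · have := ih (N - r) (by omega) r rfl (by omega) hrN (p+1) (by omega) (by omega)
          omega

lemma lav_rec (N p q : ℕ) (h1 : 1 ≤ p) (h2 : p < N) (hq1 : 1 ≤ q) (hq2 : q < N) :
    lav N p (q+1) = lav N (lav N p q) (p+1) := by
  obtain ⟨hb1, hb2⟩ := lav_bounds N (N - p) p rfl h1 h2 q hq1 (by omega)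
  rw [lav_row_eq N p h1 h2]
  obtain ⟨q', rfl⟩ : ∃ q', q = q' + 1 := ⟨q - 1, by omega⟩
  show ltbl N (N-p-1) (lrow (ltbl N (N-p-1)) p (q'+1)) (p+1) = _
  rw [← lav_row_eq N p h1 h2]
  exact ltbl_lav N (N-p-1) _ (p+1) (by omega) (by omega) (by omega)

lemma lav_growth (N p : ℕ) (h1 : 1 ≤ p) (h2 : p < N) :
    ∀ q, 1 ≤ q → q ≤ N →
      (∃ q', 1 ≤ q' ∧ q' ≤ q ∧ lav N p q' = N) ∨ p + q ≤ lav N p q := by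
  intro q
  induction q with
  | zero => omega
  | succ q ihq =>
    intro hq1 hq2
    rcases Nat.eq_or_lt_of_le hq1 with hq | hq
    · rw [← hq, lav_one N p h1 h2]; right; omega
    · have hq1' : 1 ≤ q := by omega
      rcases ihq hq1' (by omega) with ⟨q', hA, hB, hC⟩ | hgr
      · exact Or.inl ⟨q', hA, by omega, hC⟩
      · obtain ⟨hb1, hb2⟩ := lav_bounds N (N-p) p rfl h1 h2 q hq1' (by omega)
        rcases Nat.eq_or_lt_of_le hb2 with hrN | hrN
        · exact Or.inl ⟨q, hq1', by omega, hrN⟩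
        · right
          rw [lav_rec N p q h1 h2 hq1' (by omega)]
          have := lav_bounds N (N - lav N p q) (lav N p q) rfl (by omega) hrN
            (p+1) (by omega) (by omega)
          omega

lemma lav_hit (N p : ℕ) (h1 : 1 ≤ p) (h2 : p < N) :
    ∃ q, (1 ≤ q ∧ q ≤ N - p) ∧ lav N p q = N := by
  rcases lav_growth N p h1 h2 (N - p) (by omega) (by omega) with ⟨q', hA, hB, hC⟩ | hgr
  · exact ⟨q', ⟨hA, hB⟩, hC⟩
  · refine ⟨N - p, ⟨by omega, le_refl _⟩, ?_⟩
    have := lav_bounds N (N-p) p rfl h1 h2 (N-p) (by omega) (by omega)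
    omega

lemma pred_mod (d q : ℕ) (hd : 1 ≤ d) (hq : 1 ≤ q) : d ∣ q ↔ (q - 1) % d = d - 1 := by
  have hDR := Nat.div_add_mod (q-1) d
  set D := (q-1)/d with hD
  set R := (q-1)%d with hR
  have hRlt : R < d := Nat.mod_lt _ (by omega)
  constructor
  · rintro ⟨k, hk⟩
    have hkD : D < k := by
      by_contra hc
      have : d * k ≤ d * D := Nat.mul_le_mul_left d (by omega)
      omega
    have hdvd : d * (k - D) = R + 1 := by
      rw [Nat.mul_sub]
      omega
    have : d ∣ R + 1 := ⟨k - D, hdvd.symm⟩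
    have := Nat.le_of_dvd (by omega) this
    omega
  · intro hRd
    refine ⟨D + 1, ?_⟩
    have : d * (D + 1) = d * D + d := by ring
    omega

open Classical in
noncomputable def lavd (N p : ℕ) : ℕ :=
  if h : ∃ q, (1 ≤ q ∧ q ≤ N - p) ∧ lav N p q = N then Nat.find h else 0

lemma lavd_spec (N p : ℕ) (h1 : 1 ≤ p) (h2 : p < N) :
    (1 ≤ lavd N p ∧ lavd N p ≤ N - p) ∧ lav N p (lavd N p) = N := by
  have h := lav_hit N p h1 h2
  rw [lavd, dif_pos h]
  exact Nat.find_spec h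

lemma lavd_min (N p : ℕ) (h1 : 1 ≤ p) (h2 : p < N) :
    ∀ q, 1 ≤ q → q < lavd N p → lav N p q ≠ N := by
  intro q hq1 hq2
  have h := lav_hit N p h1 h2
  rw [lavd, dif_pos h] at hq2
  have hm := Nat.find_min h hq2
  intro hc
  have hd := lavd_spec N p h1 h2
  rw [lavd, dif_pos h] at hd
  exact hm ⟨⟨hq1, by omega⟩, hc⟩
lemma lavd_period (N p : ℕ) (h1 : 1 ≤ p) (h2 : p < N) :
    ∀ m, 1 ≤ m → lavd N p + m ≤ N → lav N p (lavd N p + m) = lav N p m := by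
  obtain ⟨⟨hd1, hd2⟩, hdN⟩ := lavd_spec N p h1 h2
  set d := lavd N p with hd
  intro m
  induction m with
  | zero => omega
  | succ m ihm =>
    intro hm1 hm2
    rcases Nat.eq_or_lt_of_le hm1 with hm | hm
    · rw [← hm]
      rw [lav_rec N p d h1 h2 (by omega) (by omega), hdN,
        lav_N N (by omega) (p+1), lav_one N p h1 h2]
    · have hm1' : 1 ≤ m := by omega
      have e1 : d + (m + 1) = (d + m) + 1 := by omega
      rw [e1, lav_rec N p (d+m) h1 h2 (by omega) (by omega), ihm hm1' (by omega),
        ← lav_rec N p m h1 h2 hm1' (by omega)]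

lemma lav_posmod (N p : ℕ) (h1 : 1 ≤ p) (h2 : p < N) :
    ∀ q, 1 ≤ q → q ≤ N → lav N p q = lav N p ((q - 1) % lavd N p + 1) := by
  obtain ⟨⟨hd1, hd2⟩, hdN⟩ := lavd_spec N p h1 h2
  set d := lavd N p with hd
  intro q
  induction q using Nat.strong_induction_on with
  | _ q ihq =>
    intro hq1 hq2
    by_cases hqd : q ≤ d
    · rw [Nat.mod_eq_of_lt (by omega)]
      congr 1; omega
    · have e1 : q = d + (q - d) := by omega
      conv_lhs => rw [e1]
      rw [lavd_period N p h1 h2 (q - d) (by omega) (by omega),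
        ihq (q - d) (by omega) (by omega) (by omega)]
      congr 2
      have e2 : q - 1 = (q - d - 1) + d := by omega
      rw [e2, Nat.add_mod_right]

lemma lav_strictinc (N p : ℕ) (h1 : 1 ≤ p) (h2 : p < N) :
    ∀ q q', 1 ≤ q → q < q' → q' ≤ lavd N p → lav N p q < lav N p q' := by
  obtain ⟨⟨hd1, hd2⟩, hdN⟩ := lavd_spec N p h1 h2
  have step : ∀ q, 1 ≤ q → q + 1 ≤ lavd N p → lav N p q < lav N p (q+1) := by
    intro q hq1 hq2
    have hne := lavd_min N p h1 h2 q hq1 (by omega)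
    obtain ⟨hb1, hb2⟩ := lav_bounds N (N-p) p rfl h1 h2 q hq1 (by omega)
    rw [lav_rec N p q h1 h2 hq1 (by omega)]
    have := lav_bounds N (N - lav N p q) (lav N p q) rfl (by omega) (by omega)
      (p+1) (by omega) (by omega)
    omega
  intro q q' hq1
  induction q' with
  | zero => intro h _; omega
  | succ q' ih =>
    intro hlt hle
    rcases Nat.eq_or_lt_of_le hlt with h | h
    · rw [← h]; exact step q hq1 (by omega)
    · exact lt_trans (ih (by omega) (by omega)) (step q' (by omega) hle)

lemma lav_hit_iff (N p : ℕ) (h1 : 1 ≤ p) (h2 : p < N) :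
    ∀ q, 1 ≤ q → q ≤ N → (lav N p q = N ↔ lavd N p ∣ q) := by
  obtain ⟨⟨hd1, hd2⟩, hdN⟩ := lavd_spec N p h1 h2
  set d := lavd N p with hd
  intro q hq1 hq2
  have hmod := lav_posmod N p h1 h2 q hq1 hq2
  have hrlt : (q - 1) % d < d := Nat.mod_lt _ (by omega)
  rw [pred_mod d q (by omega) hq1]
  constructor
  · intro hqN
    by_contra hc
    have hne := lavd_min N p h1 h2 ((q-1) % d + 1) (by omega) (by omega)
    rw [← hmod] at hne
    exact hne hqN
  · intro hrd
    rw [hmod]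
    have : (q - 1) % d + 1 = d := by omega
    rw [this]
    exact hdN

def lbar (N x : ℕ) : ℕ := (x - 1) % N + 1

lemma lbar_range (N x : ℕ) (hN : 1 ≤ N) : 1 ≤ lbar N x ∧ lbar N x ≤ N := by
  have : (x - 1) % N < N := Nat.mod_lt _ (by omega)
  unfold lbar; omega

lemma lbar_mod (N x : ℕ) (hN : 1 ≤ N) (hx : 1 ≤ x) : lbar N x % N = x % N := by
  have hk := Nat.div_add_mod (x-1) N
  conv_rhs => rw [show x = N * ((x-1)/N) + ((x-1) % N + 1) by omega, Nat.mul_add_mod]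
  rfl

lemma lbar_id (N x : ℕ) (h1 : 1 ≤ x) (h2 : x ≤ N) : lbar N x = x := by
  unfold lbar; rw [Nat.mod_eq_of_lt (by omega)]; omega

lemma lbar_top (N x : ℕ) (h1 : N < x) (h2 : x ≤ 2*N) : lbar N x = x - N := by
  unfold lbar
  rw [show x - 1 = N * 1 + (x - N - 1) by omega, Nat.mul_add_mod,
    Nat.mod_eq_of_lt (by omega)]
  omega

lemma lbar_succ (N x : ℕ) : lbar N (x+1) = x % N + 1 := rfl

lemma heqmod (N a b : ℕ) (ha1 : 1 ≤ a) (ha2 : a ≤ N) (hb1 : 1 ≤ b) (hb2 : b ≤ N)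
    (h : a % N = b % N) : a = b := by
  by_cases hA : a = N
  · by_cases hB : b = N
    · omega
    · subst hA
      rw [Nat.mod_self, Nat.mod_eq_of_lt (by omega)] at h
      omega
  · by_cases hB : b = N
    · subst hB
      rw [Nat.mod_self, Nat.mod_eq_of_lt (by omega)] at h
      omega
    · rw [Nat.mod_eq_of_lt (by omega), Nat.mod_eq_of_lt (by omega)] at h
      exact h

lemma modN_eq_zero (N p : ℕ) (hN : 1 ≤ N) (h0 : p % N = 0) (h1 : 1 ≤ p) (h2 : p < 2*N) :
    p = N := by
  obtain ⟨k, hk⟩ := Nat.dvd_of_mod_eq_zero h0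
  rcases Nat.lt_or_ge k 2 with hc | hc
  · interval_cases k <;> omega
  · have : N * 2 ≤ N * k := Nat.mul_le_mul_left N hc
    omega

lemma multN_cases (N v : ℕ) (hN : 1 ≤ N) (h0 : v % N = 0) (h1 : 1 ≤ v) (h2 : v ≤ 2*N) :
    v = N ∨ v = 2*N := by
  obtain ⟨k, hk⟩ := Nat.dvd_of_mod_eq_zero h0
  rcases Nat.lt_or_ge k 3 with hc | hc
  · interval_cases k <;> omega
  · have : N * 3 ≤ N * k := Nat.mul_le_mul_left N hc
    omega

lemma mod_succ_eq (N a b : ℕ) (h : a % N = b % N) : (a+1) % N = (b+1) % N := by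
  rw [Nat.add_mod a 1, Nat.add_mod b 1, h]

lemma lav_cong (N : ℕ) (hN : 1 ≤ N) (HP : ∀ p, 1 ≤ p → p ≤ N → lav N p N = N) :
    ∀ m p, 2*N - p = m → 1 ≤ p → p ≤ 2*N → ∀ q, 1 ≤ q → q ≤ 2*N →
      lav (2*N) p q % N = lav N (lbar N p) (lbar N q) % N := by
  intro m
  induction m using Nat.strong_induction_on with
  | _ m ih =>
    intro p hm h1 h2 q hq1 hq2
    rcases Nat.eq_or_lt_of_le h2 with hptop | hptop
    · -- p = 2N
      have hb2N : lbar N (2*N) = N := by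
        rw [lbar_top N (2*N) (by omega) (by omega)]; omega
      subst hptop
      rw [lav_N (2*N) (by omega) q, hb2N, lav_N N hN (lbar N q),
        lbar_mod N q hN hq1]
    · -- p < 2N
      have hBp := lbar_range N p hN
      have hBpmod := lbar_mod N p hN h1
      induction q with
      | zero => omega
      | succ q ihq =>
        have hBq1 := lbar_range N (q+1) hN
        rcases Nat.eq_or_lt_of_le hq1 with hq | hq
        · -- q+1 = 1
          have hq0 : q = 0 := by omega
          subst hq0
          rw [lav_one (2*N) p h1 hptop]
          have hb1 : lbar N 1 = 1 := lbar_id N 1 le_rfl hN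
          rw [hb1]
          rcases Nat.eq_or_lt_of_le hBp.2 with hBpN | hBpN
          · rw [hBpN, lav_N N hN 1]
            have hp0 : p % N = 0 := by rw [← hBpmod, hBpN, Nat.mod_self]
            have := mod_succ_eq N p 0 (by rw [hp0, Nat.zero_mod])
            simpa using this
          · rw [lav_one N (lbar N p) hBp.1 hBpN]
            exact mod_succ_eq N p (lbar N p) hBpmod.symm
        · -- q ≥ 1, step
          have hq1' : 1 ≤ q := by omega
          have hIHq := ihq hq1' (by omega)
          set r := lav (2*N) p q with hr
          obtain ⟨hrb1, hrb2⟩ := lav_bounds (2*N) (2*N - p) p rfl h1 (by omega) q hq1' (by omega)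
          have hrec : lav (2*N) p (q+1) = lav (2*N) r (p+1) :=
            lav_rec (2*N) p q h1 (by omega) hq1' (by omega)
          set r0 := lav N (lbar N p) (lbar N q) with hr0def
          have hr0 : 1 ≤ r0 ∧ r0 ≤ N := by
            rcases Nat.eq_or_lt_of_le hBp.2 with hBpN | hBpN
            · rw [hr0def, hBpN, lav_N N hN]
              exact lbar_range N q hN
            · have := lav_bounds N (N - lbar N p) (lbar N p) rfl hBp.1 hBpN
                (lbar N q) (lbar_range N q hN).1 (lbar_range N q hN).2
              omega
          have hbarr : lbar N r = r0 := by
            refine heqmod N (lbar N r) r0 (lbar_range N r hN).1 (lbar_range N r hN).2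
              hr0.1 hr0.2 ?_
            rw [lbar_mod N r hN (by omega), hIHq]
          have hout : lav (2*N) r (p+1) % N = lav N r0 (lbar N (p+1)) % N := by
            have := ih (2*N - r) (by omega) r rfl (by omega) hrb2 (p+1) (by omega) (by omega)
            rw [hbarr] at this
            exact this
          rw [hrec, hout]
          -- now case analysis
          by_cases hBqN : lbar N q = N
          · -- N ∣ q
            have hq0 : q % N = 0 := by
              rw [← lbar_mod N q hN hq1', hBqN, Nat.mod_self]
            have hBq1v : lbar N (q+1) = 1 := by rw [lbar_succ, hq0]
            have hr0N : r0 = N := by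
              rw [hr0def, hBqN]
              exact HP (lbar N p) hBp.1 hBp.2
            rw [hBq1v, hr0N, lav_N N hN]
            -- goal: lbar N (p+1) % N = lav N (lbar N p) 1 % N
            rcases Nat.eq_or_lt_of_le hBp.2 with hBpN | hBpN
            · rw [hBpN, lav_N N hN 1]
              have hp0 : p % N = 0 := by rw [← hBpmod, hBpN, Nat.mod_self]
              rw [lbar_succ, hp0]
            · rw [lav_one N (lbar N p) hBp.1 hBpN, lbar_succ]
              exact mod_succ_eq N (p % N) (lbar N p)
                (by rw [Nat.mod_mod_of_dvd p (dvd_refl N), hBpmod])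
          · -- lbar N q < N
            have hBqlt : lbar N q < N := by
              rcases Nat.eq_or_lt_of_le (lbar_range N q hN).2 with h' | h'
              · exact absurd h' hBqN
              · exact h'
            have hqmodlt : q % N = lbar N q := by
              rw [← lbar_mod N q hN hq1', Nat.mod_eq_of_lt hBqlt]
            have hBq1v : lbar N (q+1) = lbar N q + 1 := by rw [lbar_succ, hqmodlt]
            rw [hBq1v]
            rcases Nat.eq_or_lt_of_le hBp.2 with hBpN | hBpN
            · -- p = N
              have hpN : p = N := by
                refine modN_eq_zero N p hN ?_ h1 hptop
                rw [← hBpmod, hBpN, Nat.mod_self]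
              have hr0q : r0 = lbar N q := by rw [hr0def, hBpN, lav_N N hN]
              rw [hBpN, lav_N N hN (lbar N q + 1), hpN]
              have hb : lbar N (N+1) = 1 := by
                rw [lbar_succ, Nat.mod_self]
              rw [hb, hr0q, lav_one N (lbar N q) (lbar_range N q hN).1 hBqlt]
            · -- lbar N p < N
              have hrecN : lav N (lbar N p) (lbar N q + 1) = lav N r0 (lbar N p + 1) :=
                lav_rec N (lbar N p) (lbar N q) hBp.1 hBpN (lbar_range N q hN).1 hBqlt
              rw [hrecN]
              have hbp1 : lbar N (p+1) = lbar N p + 1 := by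
                rw [lbar_succ, ← hBpmod, Nat.mod_eq_of_lt hBpN]
              rw [hbp1]

lemma lav_P : ∀ n, ∀ p, 1 ≤ p → p ≤ 2^n → lav (2^n) p (2^n) = 2^n := by
  intro n
  induction n with
  | zero =>
    intro p h1 h2
    interval_cases p
    exact lav_N 1 le_rfl 1
  | succ n ih =>
    set N := 2^n with hNdef
    have hN : 1 ≤ N := Nat.one_le_two_pow
    have hM : 2^(n+1) = 2*N := by rw [pow_succ]; ring
    rw [hM]
    intro p h1 h2
    rcases Nat.eq_or_lt_of_le h2 with hptop | hptop
    · rw [hptop]; exact lav_N (2*N) (by omega) (2*N)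
    · -- p < 2N
      have hcong := lav_cong N hN ih (2*N - p) p rfl h1 (by omega)
      obtain ⟨⟨hd1, hd2⟩, hdM⟩ := lavd_spec (2*N) p h1 hptop
      set d' := lavd (2*N) p with hd'
      have hM0 : (2*N) % N = 0 := by
        rw [show 2*N = N*2 by ring, Nat.mul_mod_right]
      -- it suffices that d' ∣ 2N
      suffices hdvd : d' ∣ 2*N by
        exact (lav_hit_iff (2*N) p h1 hptop (2*N) (by omega) le_rfl).mpr hdvd
      have hBp := lbar_range N p hN
      rcases Nat.eq_or_lt_of_le hBp.2 with hBpN | hBpN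
      · -- lbar N p = N
        have hA := hcong d' (by omega) (by omega)
        rw [hdM, hBpN, lav_N N hN, hM0] at hA
        have hBd : lbar N d' = N := by
          have hr := lbar_range N d' hN
          refine heqmod N (lbar N d') N hr.1 hr.2 hN le_rfl ?_
          rw [← hA, Nat.mod_self]
        have hNd : N ∣ d' := (pred_mod N d' hN (by omega)).mpr (by
          have := hBd
          unfold lbar at this
          omega)
        rcases multN_cases N d' hN (by
            obtain ⟨k, hk⟩ := hNd
            rw [hk, Nat.mul_mod_right]) (by omega) (by omega) with h | h
        · exact h ▸ (⟨2, by ring⟩ : N ∣ 2*N)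
        · exact h ▸ dvd_refl _
      · -- lbar N p < N
        set pb := lbar N p with hpb
        obtain ⟨⟨he1, he2⟩, heN⟩ := lavd_spec N pb hBp.1 hBpN
        set e := lavd N pb with he
        have heNdvd : e ∣ N :=
          (lav_hit_iff N pb hBp.1 hBpN N hN le_rfl).mp (ih pb hBp.1 hBp.2)
        -- Step A : e ∣ d'
        have hA := hcong d' (by omega) (by omega)
        rw [hdM, hM0] at hA
        have hvalNrange : 1 ≤ lav N pb (lbar N d') ∧ lav N pb (lbar N d') ≤ N := by
          have := lav_bounds N (N - pb) pb rfl hBp.1 hBpN (lbar N d')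
            (lbar_range N d' hN).1 (lbar_range N d' hN).2
          omega
        have hvalN : lav N pb (lbar N d') = N := by
          refine heqmod N _ N hvalNrange.1 hvalNrange.2 hN le_rfl ?_
          rw [← hA, Nat.mod_self]
        have heBd : e ∣ lbar N d' :=
          (lav_hit_iff N pb hBp.1 hBpN (lbar N d') (lbar_range N d' hN).1
            (lbar_range N d' hN).2).mp hvalN
        have hed' : e ∣ d' := by
          by_cases hdle : d' ≤ N
          · rwa [lbar_id N d' (by omega) hdle] at heBd
          · rw [lbar_top N d' (by omega) (by omega)] at heBd
            have : d' = (d' - N) + N := by omega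
            rw [this]
            exact Nat.dvd_add heBd (dvd_trans heNdvd (dvd_refl N))
        -- Step B
        have hv1cong := hcong e (by omega) (by omega)
        rw [lbar_id N e (by omega) (by omega), heN] at hv1cong
        have hv1b := lav_bounds (2*N) (2*N - p) p rfl h1 (by omega) e (by omega) (by omega)
        rcases multN_cases N (lav (2*N) p e) hN (by rw [hv1cong, Nat.mod_self]) (by omega)
            (by omega) with hv1 | hv1
        · -- v1 = N
          have hdne : d' ≠ e := by
            intro hc
            rw [← hc, hdM] at hv1
            omega
          obtain ⟨k, hk⟩ := hed'
          have hk2 : 2 ≤ k := by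
            rcases Nat.lt_or_ge k 2 with hc | hc
            · interval_cases k <;> omega
            · exact hc
          have h2ed : 2*e ≤ d' := by
            have : e * 2 ≤ e * k := Nat.mul_le_mul_left e hk2
            omega
          by_cases h2eN : 2*e ≤ N
          · have hv2cong := hcong (2*e) (by omega) (by omega)
            rw [lbar_id N (2*e) (by omega) h2eN] at hv2cong
            have hval2 : lav N pb (2*e) = N :=
              (lav_hit_iff N pb hBp.1 hBpN (2*e) (by omega) h2eN).mpr ⟨2, by ring⟩
            rw [hval2, Nat.mod_self] at hv2cong
            have hv2b := lav_bounds (2*N) (2*N - p) p rfl h1 (by omega) (2*e)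
              (by omega) (by omega)
            have hinc := lav_strictinc (2*N) p h1 (by omega) e (2*e) (by omega)
              (by omega) h2ed
            rcases multN_cases N (lav (2*N) p (2*e)) hN hv2cong (by omega) (by omega) with
              hv2 | hv2
            · omega
            · have : d' ∣ 2*e :=
                (lav_hit_iff (2*N) p h1 hptop (2*e) (by omega) (by omega)).mp hv2
              exact dvd_trans this (by
                obtain ⟨k', hk'⟩ := heNdvd
                exact ⟨k', by rw [hk']; ring⟩)
          · -- 2e > N → e = N, contradiction with d' ≥ 2e
            exfalso
            obtain ⟨k', hk'⟩ := heNdvd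
            rcases k' with _ | _ | k''
            · rw [Nat.mul_zero] at hk'; omega
            · rw [Nat.mul_one] at hk'; omega
            · have hge : e * 2 ≤ e * (k''+1+1) := Nat.mul_le_mul_left e (by omega)
              omega
        · -- v1 = 2N : hit at e
          have : d' ∣ e :=
            (lav_hit_iff (2*N) p h1 hptop e (by omega) (by omega)).mp hv1
          exact dvd_trans this (dvd_trans heNdvd (⟨2, by ring⟩ : N ∣ 2*N))

lemma lav_LD (N : ℕ) (hN : 1 ≤ N) (HP : ∀ p, 1 ≤ p → p ≤ N → lav N p N = N) :
    ∀ a p, N - p = a → 1 ≤ p → p ≤ N →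
    ∀ b q, N - q = b → 1 ≤ q → q ≤ N →
    ∀ r, 1 ≤ r → r ≤ N →
      lav N p (lav N q r) = lav N (lav N p q) (lav N p r) := by
  intro a
  induction a using Nat.strong_induction_on with
  | _ a iha =>
    intro p hpa hp1 hp2
    rcases Nat.eq_or_lt_of_le hp2 with hpN | hpN
    · -- p = N
      intro b q hqb hq1 hq2 r hr1 hr2
      rw [hpN]
      simp only [lav_N N hN]
    · -- p < N
      intro b
      induction b using Nat.strong_induction_on with
      | _ b ihb =>
        intro q hqb hq1 hq2
        rcases Nat.eq_or_lt_of_le hq2 with hqN | hqN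
        · -- q = N
          intro r hr1 hr2
          rw [hqN, lav_N N hN r, HP p hp1 (le_of_lt hpN), lav_N N hN (lav N p r)]
        · -- q < N
          intro r
          induction r using Nat.strong_induction_on with
          | _ r ihr =>
            intro hr1 hr2
            rcases Nat.eq_or_lt_of_le hr1 with hr1' | hr1'
            · -- r = 1
              rw [← hr1']
              rw [lav_one N q hq1 hqN, lav_one N p hp1 hpN]
              exact lav_rec N p q hp1 hpN hq1 hqN
            · -- r ≥ 2
              obtain ⟨r', rfl⟩ : ∃ r', r = r' + 1 := ⟨r - 1, by omega⟩
              have hr'1 : 1 ≤ r' := by omega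
              have hr'N : r' < N := by omega
              set s := lav N q r' with hs
              obtain ⟨hsb1, hsb2⟩ := lav_bounds N (N-q) q rfl hq1 hqN r' hr'1 (by omega)
              have hqrec : lav N q (r'+1) = lav N s (q+1) :=
                lav_rec N q r' hq1 hqN hr'1 hr'N
              set PQ := lav N p q with hPQ
              obtain ⟨hpqb1, hpqb2⟩ := lav_bounds N (N-p) p rfl hp1 hpN q hq1 (by omega)
              set z := lav N p r' with hz
              obtain ⟨hzb1, hzb2⟩ := lav_bounds N (N-p) p rfl hp1 hpN r' hr'1 (by omega)
              have hGpqr' : lav N p s = lav N PQ z :=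
                ihr r' (by omega) hr'1 (by omega)
              have hprec : lav N p (r'+1) = lav N z (p+1) :=
                lav_rec N p r' hp1 hpN hr'1 hr'N
              have hGout : lav N PQ (lav N z (p+1)) = lav N (lav N PQ z) (lav N PQ (p+1)) :=
                iha (N - PQ) (by omega) PQ rfl (by omega) hpqb2 (N - z) z rfl
                  (by omega) hzb2 (p+1) (by omega) (by omega)
              rcases Nat.eq_or_lt_of_le hsb2 with hsN | hsN
              · -- s = N
                have hsN' : s = N := by rw [hs]; exact hsN
                have hqr : lav N q (r'+1) = q + 1 := by
                  rw [hqrec, hsN', lav_N N hN]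
                rw [hqr, lav_rec N p q hp1 hpN hq1 hqN, hprec, hGout, ← hGpqr', hsN',
                  HP p hp1 (le_of_lt hpN), lav_N N hN (lav N PQ (p+1)), ← hPQ]
              · -- s < N
                have hsN' : s < N := by rw [hs]; exact hsN
                have hGmid : lav N p (lav N s (q+1)) = lav N (lav N p s) (lav N p (q+1)) :=
                  ihb (N - s) (by omega) s rfl (by omega) (by omega) (q+1) (by omega) (by omega)
                rw [hqrec, hGmid, hGpqr', lav_rec N p q hp1 hpN hq1 hqN, ← hPQ, ← hGout,
                  ← hprec]

lemma lav_LD' (N : ℕ) (hN : 1 ≤ N) (HP : ∀ p, 1 ≤ p → p ≤ N → lav N p N = N)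
    (p q r : ℕ) (hp1 : 1 ≤ p) (hp2 : p ≤ N) (hq1 : 1 ≤ q) (hq2 : q ≤ N)
    (hr1 : 1 ≤ r) (hr2 : r ≤ N) :
    lav N p (lav N q r) = lav N (lav N p q) (lav N p r) :=
  lav_LD N hN HP (N-p) p rfl hp1 hp2 (N-q) q rfl hq1 hq2 r hr1 hr2

lemma lav_mem (N : ℕ) (hN : 1 ≤ N) (p q : ℕ) (hp1 : 1 ≤ p) (hp2 : p ≤ N)
    (hq1 : 1 ≤ q) (hq2 : q ≤ N) : 1 ≤ lav N p q ∧ lav N p q ≤ N := by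
  rcases Nat.eq_or_lt_of_le hp2 with hpN | hpN
  · rw [hpN, lav_N N hN]; omega
  · have := lav_bounds N (N-p) p rfl hp1 hpN q hq1 hq2
    omega

lemma lav_axioms (n : ℕ) : LaverAxioms (2^n) (lav (2^n)) := by
  set N := 2^n with hNdef
  have hN : 1 ≤ N := Nat.one_le_two_pow
  have HP := lav_P n
  refine ⟨?_, ?_, ?_⟩
  · intro p q hp hq
    rw [Set.mem_Icc] at *
    exact lav_mem N hN p q hp.1 hp.2 hq.1 hq.2
  · intro p hp
    rw [Set.mem_Icc] at hp
    rcases Nat.eq_or_lt_of_le hp.2 with hpN | hpN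
    · rw [hpN, lav_N N hN 1, Nat.mod_self]
    · rw [lav_one N p hp.1 hpN, Nat.mod_eq_of_lt hpN]
  · intro p q hp hq
    rw [Set.mem_Icc] at hp hq
    rcases Nat.eq_or_lt_of_le hq.2 with hqN | hqN
    · -- q = N
      rw [hqN, lav_N N hN 1]
      rcases Nat.eq_or_lt_of_le hp.2 with hpN | hpN
      · rw [hpN, lav_N N hN N, lav_N N hN 1, lav_N N hN 1]
      · rw [HP p hp.1 hp.2, lav_N N hN (lav N p 1)]
    · rcases Nat.eq_or_lt_of_le hp.2 with hpN | hpN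
      · rw [lav_one N q hq.1 hqN, hpN, lav_N N hN (q+1), lav_N N hN q, lav_N N hN 1,
          lav_one N q hq.1 hqN]
      · rw [lav_one N q hq.1 hqN, lav_one N p hp.1 hpN]
        exact lav_rec N p q hp.1 hpN hq.1 hqN

lemma le_two_pow {a n : ℕ} (h : a ≤ n) : a < 2^n :=
  lt_of_le_of_lt h ((Nat.lt_two_pow_self (n := n)))

section BSide

variable (f : ℕ → ℕ → ℕ) (hbl : IsBackLaver f)

include hbl

lemma bkey (n p q : ℕ) (hp : p < 2^n) (hq : q < 2^n) :
    f p q = 2^n - lav (2^n) (2^n - p) (2^n - q) :=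
  hbl n (lav (2^n)) (lav_axioms n) p q hp hq

lemma b0 (q : ℕ) : f 0 q = q := by
  have hq := (Nat.lt_two_pow_self (n := q))
  rw [bkey f hbl q 0 q (pow_pos (by norm_num) q) ((Nat.lt_two_pow_self (n := q))), Nat.sub_zero,
    lav_N _ Nat.one_le_two_pow]
  omega

lemma bz (p : ℕ) : f p 0 = 0 := by
  set n := p with hn
  have hp : p < 2^n := (Nat.lt_two_pow_self (n := p))
  have h1N : (1:ℕ) ≤ 2^n := Nat.one_le_two_pow
  rw [bkey f hbl n p 0 hp (pow_pos (by norm_num) n), Nat.sub_zero,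
    lav_P n (2^n - p) (by omega) (by omega)]
  omega

lemma blt (p q : ℕ) (hp1 : 1 ≤ p) : f p q < p := by
  set n := p + q with hn
  have hp : p < 2^n := le_two_pow (by omega)
  have hq : q < 2^n := le_two_pow (by omega)
  have h1N : (1:ℕ) ≤ 2^n := Nat.one_le_two_pow
  rw [bkey f hbl n p q hp hq]
  have := lav_bounds (2^n) (2^n - (2^n - p)) (2^n - p) rfl (by omega) (by omega)
    (2^n - q) (by omega) (by omega)
  omega

lemma bmem (p q : ℕ) : f p q ≤ 2^(p+q) - 1 := by
  have hp : p < 2^(p+q) := le_two_pow (by omega)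
  have hq : q < 2^(p+q) := le_two_pow (by omega)
  have h1N : (1:ℕ) ≤ 2^(p+q) := Nat.one_le_two_pow
  rw [bkey f hbl (p+q) p q hp hq]
  have := lav_mem (2^(p+q)) h1N (2^(p+q) - p) (2^(p+q) - q) (by omega) (by omega)
    (by omega) (by omega)
  omega

lemma bhom (p q r : ℕ) : f p (f q r) = f (f p q) (f p r) := by
  set n := p + q + r with hn
  set N := 2^n with hN
  have h1N : (1:ℕ) ≤ N := Nat.one_le_two_pow
  have hp : p < N := le_two_pow (by omega)
  have hq : q < N := le_two_pow (by omega)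
  have hr : r < N := le_two_pow (by omega)
  have HP := lav_P n
  have hQR := lav_mem N h1N (N - q) (N - r) (by omega) (by omega) (by omega) (by omega)
  have hPQ := lav_mem N h1N (N - p) (N - q) (by omega) (by omega) (by omega) (by omega)
  have hPR := lav_mem N h1N (N - p) (N - r) (by omega) (by omega) (by omega) (by omega)
  have e1 : f q r = N - lav N (N - q) (N - r) := bkey f hbl n q r hq hr
  have e2 : f p q = N - lav N (N - p) (N - q) := bkey f hbl n p q hp hq
  have e3 : f p r = N - lav N (N - p) (N - r) := bkey f hbl n p r hp hr
  have e4 : f p (f q r) = N - lav N (N - p) (N - f q r) :=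
    bkey f hbl n p (f q r) hp (by omega)
  have e5 : f (f p q) (f p r) = N - lav N (N - f p q) (N - f p r) :=
    bkey f hbl n (f p q) (f p r) (by omega) (by omega)
  have h6 : N - f q r = lav N (N - q) (N - r) := by omega
  have h7 : N - f p q = lav N (N - p) (N - q) := by omega
  have h8 : N - f p r = lav N (N - p) (N - r) := by omega
  rw [e4, e5, h6, h7, h8,
    lav_LD' N h1N HP (N - p) (N - q) (N - r) (by omega) (by omega) (by omega) (by omega)
      (by omega) (by omega)]

lemma bzero_iff_level (p : ℕ) (hp1 : 1 ≤ p) (n : ℕ) (hpn : p < 2^n) :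
    ∀ q, q < 2^n → (f p q = 0 ↔ lavd (2^n) (2^n - p) ∣ q) := by
  intro q hq
  have h1N : (1:ℕ) ≤ 2^n := Nat.one_le_two_pow
  have hdN : lavd (2^n) (2^n - p) ∣ 2^n := by
    refine (lav_hit_iff (2^n) (2^n - p) (by omega) (by omega) (2^n) h1N le_rfl).mp ?_
    exact lav_P n (2^n - p) (by omega) (by omega)
  have hkey := bkey f hbl n p q (by omega) hq
  have hbnd := lav_mem (2^n) h1N (2^n - p) (2^n - q) (by omega) (by omega)
    (by omega) (by omega)
  have hiff := lav_hit_iff (2^n) (2^n - p) (by omega) (by omega) (2^n - q)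
    (by omega) (by omega)
  constructor
  · intro h0
    have : lav (2^n) (2^n - p) (2^n - q) = 2^n := by omega
    have hd : lavd (2^n) (2^n - p) ∣ 2^n - q := hiff.mp this
    have := Nat.dvd_sub hdN hd
    rwa [Nat.sub_sub_self (by omega)] at this
  · intro hd
    have : lavd (2^n) (2^n - p) ∣ 2^n - q := Nat.dvd_sub hdN hd
    have := hiff.mpr this
    omega

open Classical in
noncomputable def bPi (p : ℕ) : ℕ :=
  if h : ∃ s, 0 < s ∧ f p s = 0 then Nat.find h else 0

lemma bPi_eq_lavd (p : ℕ) (hp1 : 1 ≤ p) (n : ℕ) (hpn : p < 2^n) :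
    bPi f p = lavd (2^n) (2^n - p) := by
  have h1N : (1:ℕ) ≤ 2^n := Nat.one_le_two_pow
  have hdspec := lavd_spec (2^n) (2^n - p) (by omega) (by omega)
  have hdle : lavd (2^n) (2^n - p) ≤ p := by omega
  have hzero : f p (lavd (2^n) (2^n - p)) = 0 :=
    (bzero_iff_level f hbl p hp1 n hpn _ (by omega)).mpr dvd_rfl
  have hex : ∃ s, 0 < s ∧ f p s = 0 := ⟨lavd (2^n) (2^n - p), by omega, hzero⟩
  rw [bPi, dif_pos hex]
  have h1 : Nat.find hex ≤ lavd (2^n) (2^n - p) := Nat.find_min' hex ⟨by omega, hzero⟩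
  obtain ⟨hfpos, hfzero⟩ := Nat.find_spec hex
  have h2 : lavd (2^n) (2^n - p) ∣ Nat.find hex :=
    (bzero_iff_level f hbl p hp1 n hpn (Nat.find hex) (by omega)).mp hfzero
  have := Nat.le_of_dvd hfpos h2
  omega

lemma bz1 (p : ℕ) (hp1 : 1 ≤ p) (q : ℕ) : f p q = 0 ↔ bPi f p ∣ q := by
  have hpn : p < 2^(p+q) := le_two_pow (by omega)
  rw [bPi_eq_lavd f hbl p hp1 (p+q) hpn]
  exact bzero_iff_level f hbl p hp1 (p+q) hpn q (le_two_pow (by omega))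

lemma bz2 (p : ℕ) (hp1 : 1 ≤ p) : ∃ j, bPi f p = 2^j := by
  have hpn : p < 2^p := (Nat.lt_two_pow_self (n := p))
  have hdN : lavd (2^p) (2^p - p) ∣ 2^p := by
    refine (lav_hit_iff (2^p) (2^p - p) (by omega) (by omega) (2^p)
      Nat.one_le_two_pow le_rfl).mp ?_
    exact lav_P p (2^p - p) (by omega) (by omega)
  rw [bPi_eq_lavd f hbl p hp1 p hpn]
  obtain ⟨j, _, hj⟩ := (Nat.dvd_prime_pow Nat.prime_two).mp hdN
  exact ⟨j, hj⟩

lemma bPi_pos (p : ℕ) (hp1 : 1 ≤ p) : 1 ≤ bPi f p ∧ bPi f p ≤ p := by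
  have hpn : p < 2^p := (Nat.lt_two_pow_self (n := p))
  have hdspec := lavd_spec (2^p) (2^p - p) (by omega) (by omega)
  rw [bPi_eq_lavd f hbl p hp1 p hpn]
  omega

lemma bPidvd (p : ℕ) (hp1 : 1 ≤ p) (n : ℕ) (hpn : p < 2^n) : bPi f p ∣ 2^n := by
  rw [bPi_eq_lavd f hbl p hp1 n hpn]
  refine (lav_hit_iff (2^n) (2^n - p) (by omega) (by omega) (2^n)
    Nat.one_le_two_pow le_rfl).mp ?_
  exact lav_P n (2^n - p) (by omega) (by omega)

lemma bz6' (p : ℕ) (hp1 : 1 ≤ p) (q : ℕ) : f p q = f p (q % bPi f p) := by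
  have h1N : (1:ℕ) ≤ 2^(p+q) := Nat.one_le_two_pow
  have hpn : p < 2^(p+q) := le_two_pow (by omega)
  have hqn : q < 2^(p+q) := le_two_pow (by omega)
  have hdl : bPi f p = lavd (2^(p+q)) (2^(p+q) - p) := bPi_eq_lavd f hbl p hp1 (p+q) hpn
  have hdspec := lavd_spec (2^(p+q)) (2^(p+q) - p) (by omega) (by omega)
  have hPip := bPi_pos f hbl p hp1
  have hdN : bPi f p ∣ 2^(p+q) := bPidvd f hbl p hp1 (p+q) hpn
  have hqm : q % bPi f p < 2^(p+q) := by
    have : q % bPi f p ≤ q := Nat.mod_le q _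
    omega
  rw [bkey f hbl (p+q) p q hpn hqn, bkey f hbl (p+q) p (q % bPi f p) hpn hqm]
  have harith : (2^(p+q) - q - 1) % lavd (2^(p+q)) (2^(p+q) - p)
      = (2^(p+q) - q % bPi f p - 1) % lavd (2^(p+q)) (2^(p+q) - p) := by
    have hdm := Nat.div_add_mod q (bPi f p)
    have e1 : 2^(p+q) - q % bPi f p - 1
        = (2^(p+q) - q - 1) + lavd (2^(p+q)) (2^(p+q) - p) * (q / bPi f p) := by
      rw [← hdl]; omega
    rw [e1, Nat.add_mul_mod_self_left]
  rw [lav_posmod (2^(p+q)) (2^(p+q)-p) (by omega) (by omega) (2^(p+q) - q)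
      (by omega) (by omega),
    lav_posmod (2^(p+q)) (2^(p+q)-p) (by omega) (by omega) (2^(p+q) - q % bPi f p)
      (by omega) (by omega), harith]

lemma bz6 (p : ℕ) (hp1 : 1 ≤ p) (q : ℕ) : f p (q + bPi f p) = f p q := by
  rw [bz6' f hbl p hp1 (q + bPi f p), Nat.add_mod_right, ← bz6' f hbl p hp1 q]

lemma bz4 (p : ℕ) (hp1 : 1 ≤ p) : f p (bPi f p - 1) = p - 1 := by
  have h1N : (1:ℕ) ≤ 2^p := Nat.one_le_two_pow
  have hpn : p < 2^p := (Nat.lt_two_pow_self (n := p))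
  have hdl : bPi f p = lavd (2^p) (2^p - p) := bPi_eq_lavd f hbl p hp1 p hpn
  have hdspec := lavd_spec (2^p) (2^p - p) (by omega) (by omega)
  have hPip := bPi_pos f hbl p hp1
  have hdN : bPi f p ∣ 2^p := bPidvd f hbl p hp1 p hpn
  rw [bkey f hbl p p (bPi f p - 1) hpn (by omega)]
  have e1 : 2^p - (bPi f p - 1) = 2^p - bPi f p + 1 := by omega
  have e2 : (2^p - bPi f p + 1 - 1) % lavd (2^p) (2^p - p) = 0 := by
    rw [← hdl]
    simp only [Nat.add_sub_cancel]
    obtain ⟨c, hc⟩ : bPi f p ∣ 2^p - bPi f p := Nat.dvd_sub hdN dvd_rfl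
    rw [hc, Nat.mul_mod_right]
  rw [e1, lav_posmod (2^p) (2^p - p) (by omega) (by omega) (2^p - bPi f p + 1)
    (by omega) (by omega), e2, lav_one (2^p) (2^p - p) (by omega) (by omega)]
  omega

lemma bz3 (p : ℕ) (hp1 : 1 ≤ p) (q q' : ℕ) (hqq : q < q') (hq' : q' < bPi f p) :
    f p q < f p q' := by
  have h1N : (1:ℕ) ≤ 2^p := Nat.one_le_two_pow
  have hpn : p < 2^p := (Nat.lt_two_pow_self (n := p))
  have hdl : bPi f p = lavd (2^p) (2^p - p) := bPi_eq_lavd f hbl p hp1 p hpn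
  have hdspec := lavd_spec (2^p) (2^p - p) (by omega) (by omega)
  have hPip := bPi_pos f hbl p hp1
  have hdN : bPi f p ∣ 2^p := bPidvd f hbl p hp1 p hpn
  obtain ⟨k, hk⟩ := hdN
  have hk1 : 1 ≤ k := by
    rcases Nat.eq_zero_or_pos k with h | h
    · subst h; omega
    · exact h
  have hmul : bPi f p * (k-1) = bPi f p * k - bPi f p := by
    rw [Nat.mul_sub, Nat.mul_one]
  have hred : ∀ x, x < bPi f p →
      lav (2^p) (2^p - p) (2^p - x) = lav (2^p) (2^p - p) (bPi f p - x) := by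
    intro x hx
    rw [lav_posmod (2^p) (2^p-p) (by omega) (by omega) (2^p - x) (by omega) (by omega),
      ← hdl]
    have e1 : 2^p - x - 1 = (bPi f p - x - 1) + bPi f p * (k-1) := by omega
    rw [e1, Nat.add_mul_mod_self_left, Nat.mod_eq_of_lt (by omega)]
    congr 1
    omega
  have h1 := bkey f hbl p p q hpn (by omega)
  have h2 := bkey f hbl p p q' hpn (by omega)
  rw [h1, h2, hred q (by omega), hred q' (by omega)]
  have hinc := lav_strictinc (2^p) (2^p - p) (by omega) (by omega)
    (bPi f p - q') (bPi f p - q) (by omega) (by omega) (by omega)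
  have hb1 := lav_mem (2^p) h1N (2^p-p) (bPi f p - q) (by omega) (by omega)
    (by omega) (by omega)
  have hb2 := lav_mem (2^p) h1N (2^p-p) (bPi f p - q') (by omega) (by omega)
    (by omega) (by omega)
  omega

omit hbl in
lemma halfrow (m Q : ℕ) (hQ1 : 1 ≤ Q) (hQ2 : Q ≤ 2^(m+1)) :
    lav (2^(m+1)) (2^m) Q = 2^m + ((Q-1) % 2^m) + 1 := by
  have h1N : (1:ℕ) ≤ 2^m := Nat.one_le_two_pow
  have hM : (2:ℕ)^(m+1) = 2*2^m := by rw [pow_succ]; ring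
  have hcong := lav_cong (2^m) h1N (lav_P m) (2*2^m - 2^m) (2^m) rfl h1N (by omega)
    Q hQ1 (by omega)
  rw [lbar_id (2^m) (2^m) h1N le_rfl, lav_N (2^m) h1N, lbar_mod (2^m) Q h1N hQ1] at hcong
  have hbnd := lav_bounds (2*2^m) (2*2^m - 2^m) (2^m) rfl h1N (by omega) Q hQ1 (by omega)
  rw [hM]
  have htmod : (2^m + ((Q-1) % 2^m) + 1) % 2^m = Q % 2^m := by
    have : 2^m + ((Q-1) % 2^m) + 1 = 2^m + lbar (2^m) Q := by rw [lbar]; omega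
    rw [this, Nat.add_mod_left, lbar_mod (2^m) Q h1N hQ1]
  have hmm : (Q - 1) % 2^m < 2^m := Nat.mod_lt _ (by omega)
  have hv1 : (lav (2*2^m) (2^m) Q - 2^m) % 2^m = lav (2*2^m) (2^m) Q % 2^m := by
    conv_rhs => rw [show lav (2*2^m) (2^m) Q = (lav (2*2^m) (2^m) Q - 2^m) + 2^m by omega]
    rw [Nat.add_mod_right]
  have ht1 : (2^m + ((Q-1) % 2^m) + 1) = (((Q-1) % 2^m) + 1) + 2^m := by ring
  have heq := heqmod (2^m) (lav (2*2^m) (2^m) Q - 2^m) (((Q-1) % 2^m) + 1)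
    (by omega) (by omega) (by omega) (by omega)
    (by rw [hv1, hcong, ← htmod, ht1, Nat.add_mod_right])
  omega

lemma bPi1 (p : ℕ) (hp1 : 1 ≤ p) (h : bPi f p = 1) : p = 1 := by
  have h4 := bz4 f hbl p hp1
  rw [h] at h4
  simp only [Nat.sub_self] at h4
  rw [bz f hbl p] at h4
  omega

omit hbl in
lemma winmod (N q : ℕ) (hN : 1 ≤ N) (hq : q < 2*N) :
    (2*N - q - 1) % N = N - 1 - q % N := by
  rcases Nat.lt_or_ge q N with hc | hc
  · rw [show 2*N - q - 1 = N*1 + (N-q-1) from by omega, Nat.mul_add_mod,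
      Nat.mod_eq_of_lt (show N-q-1 < N from by omega), Nat.mod_eq_of_lt hc]
    omega
  · have hqm : q % N = q - N := by
      conv_lhs => rw [show q = N*1 + (q-N) from by omega]
      rw [Nat.mul_add_mod, Nat.mod_eq_of_lt (show q - N < N from by omega)]
    rw [Nat.mod_eq_of_lt (show 2*N - q - 1 < N from by omega), hqm]
    omega

lemma bL6low (m q : ℕ) (hq : q < 2^(m+1)) : f (2^m) q = q % 2^m := by
  have hM : (2:ℕ)^(m+1) = 2*2^m := by rw [pow_succ]; ring
  have h1N : (1:ℕ) ≤ 2^m := Nat.one_le_two_pow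
  have hmlt : q % 2^m < 2^m := Nat.mod_lt _ (by omega)
  have hkey := bkey f hbl (m+1) (2^m) q (by omega) hq
  rw [show (2:ℕ)^(m+1) - 2^m = 2^m from by omega] at hkey
  rw [hkey, halfrow m (2^(m+1) - q) (by omega) (by omega)]
  have hw := winmod (2^m) q h1N (by omega)
  rw [show (2:ℕ)^(m+1) - q - 1 = 2*2^m - q - 1 from by omega, hw]
  omega

lemma bPiPow (m : ℕ) : bPi f (2^m) = 2^m := by
  have h1N : (1:ℕ) ≤ 2^m := Nat.one_le_two_pow
  have hM : (2:ℕ)^(m+1) = 2*2^m := by rw [pow_succ]; ring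
  have h0 : f (2^m) (2^m) = 0 := by
    rw [bL6low f hbl m (2^m) (by omega), Nat.mod_self]
  have hdvd : bPi f (2^m) ∣ 2^m := (bz1 f hbl (2^m) h1N (2^m)).mp h0
  have hle : bPi f (2^m) ≤ 2^m := Nat.le_of_dvd (by omega) hdvd
  have hpos := bPi_pos f hbl (2^m) h1N
  have h0' : f (2^m) (bPi f (2^m)) = 0 := (bz1 f hbl (2^m) h1N _).mpr dvd_rfl
  rw [bL6low f hbl m (bPi f (2^m)) (by omega)] at h0'
  rcases Nat.eq_or_lt_of_le hle with h | h
  · exact h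
  · rw [Nat.mod_eq_of_lt h] at h0'
    omega

lemma bL6 (m q : ℕ) : f (2^m) q = q % 2^m := by
  have h1N : (1:ℕ) ≤ 2^m := Nat.one_le_two_pow
  have h := bz6' f hbl (2^m) h1N q
  rw [bPiPow f hbl m] at h
  have hmlt : q % 2^m < 2^m := Nat.mod_lt _ (by omega)
  rw [h, bL6low f hbl m (q % 2^m) (by
    have : (2:ℕ)^m < 2^(m+1) := by rw [pow_succ]; omega
    omega)]
  exact Nat.mod_mod_of_dvd q dvd_rfl

lemma bmod (p x v : ℕ) : (f p x) % 2^v = f (p % 2^v) (x % 2^v) := by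
  rw [← bL6 f hbl v (f p x), bhom f hbl (2^v) p x, bL6 f hbl v p, bL6 f hbl v x]

lemma btwo (T c : ℕ) (hc : c < T) : bPi f (2^T + 2^c) = 2^(c+1) := by
  have hcT : (2:ℕ)^c < 2^T := Nat.pow_lt_pow_right one_lt_two hc
  have hcT1 : (2:ℕ)^(c+1) ≤ 2^T := Nat.pow_le_pow_right (by norm_num) (by omega)
  have h2T : (2:ℕ) ≤ 2^T := by
    calc (2:ℕ) = 2^1 := (pow_one 2).symm
    _ ≤ 2^T := Nat.pow_le_pow_right (by norm_num) (by omega)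
  have hc1 : (1:ℕ) ≤ 2^c := Nat.one_le_two_pow
  set p := 2^T + 2^c with hpdef
  have hp1 : 1 ≤ p := by omega
  have hPmod : p % 2^T = 2^c := by
    rw [hpdef, Nat.add_mod_left, Nat.mod_eq_of_lt hcT]
  have rowp : ∀ x, f p x % 2^T = x % 2^c := by
    intro x
    rw [bmod f hbl p x T, hPmod, bL6 f hbl c (x % 2^T),
      Nat.mod_mod_of_dvd x (pow_dvd_pow 2 (le_of_lt hc))]
  have cand : ∀ x, f p x = x % 2^c ∨ f p x = x % 2^c + 2^T := by
    intro x
    have h1 := rowp x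
    have h2 : f p x < p := blt f hbl p x hp1
    have hm2 : x % 2^c < 2^c := Nat.mod_lt _ (by omega)
    rcases Nat.lt_or_ge (f p x) (2^T) with h | h
    · left; rw [← h1, Nat.mod_eq_of_lt h]
    · right
      have hm : f p x % 2^T = f p x - 2^T := by
        conv_lhs => rw [show f p x = 2^T*1 + (f p x - 2^T) from by omega]
        rw [Nat.mul_add_mod, Nat.mod_eq_of_lt (by omega)]
      omega
  have hPip := bPi_pos f hbl p hp1
  obtain ⟨i, hi⟩ := bz2 f hbl p hp1
  -- Step A : ¬ (bPi f p ≤ 2^c)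
  have stepA : ¬ (bPi f p ≤ 2^c) := by
    intro hle
    have h4 := bz4 f hbl p hp1
    have hA1 : (p - 1) % 2^T = 2^c - 1 := by
      rw [show p - 1 = 2^T + (2^c - 1) from by omega, Nat.add_mod_left,
        Nat.mod_eq_of_lt (by omega)]
    have hA2 := rowp (bPi f p - 1)
    rw [h4, hA1, Nat.mod_eq_of_lt (show bPi f p - 1 < 2^c from by omega)] at hA2
    have hPc : bPi f p = 2^c := by omega
    rcases Nat.eq_zero_or_pos c with hc0 | hc0
    · -- c = 0 : bPi = 1 → p = 1, absurd
      subst hc0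
      simp only [pow_zero] at hPc
      have := bPi1 f hbl p hp1 hPc
      omega
    · -- c ≥ 1
      have hc2 : (2:ℕ) ≤ 2^c := by
        calc (2:ℕ) = 2^1 := (pow_one 2).symm
        _ ≤ 2^c := Nat.pow_le_pow_right (by norm_num) (by omega)
      have hexj : ∃ x, f p x ≠ x := by
        refine ⟨2^c - 1, ?_⟩
        rw [show 2^c - 1 = bPi f p - 1 from by omega, h4]
        omega
      classical
      set j := Nat.find hexj with hjdef
      have hjspec : f p j ≠ j := Nat.find_spec hexj
      have hjmin : ∀ x, x < j → f p x = x := by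
        intro x hx
        by_contra hcc
        exact absurd (Nat.find_min hexj hx) (by simpa using hcc)
      have hjle : j ≤ 2^c - 1 := by
        apply Nat.find_min' hexj
        rw [show 2^c - 1 = bPi f p - 1 from by omega, h4]
        omega
      have hj1 : 1 ≤ j := by
        rcases Nat.eq_zero_or_pos j with h | h
        · exfalso; apply hjspec; rw [h]; exact bz f hbl p
        · exact h
      have fpj : f p j = j + 2^T := by
        rcases cand j with h | h
        · rw [Nat.mod_eq_of_lt (by omega)] at h; exact absurd h hjspec
        · rw [Nat.mod_eq_of_lt (by omega)] at h; exact h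
      set u := j + 2^T with hudef
      have hu1 : 1 ≤ u := by omega
      have hPiu : bPi f u ∣ 2^T := by
        obtain ⟨iu, hiu⟩ := bz2 f hbl u hu1
        have := bPi_pos f hbl u hu1
        have hlt : (2:ℕ)^iu < 2^(T+1) := by
          rw [← hiu]
          calc bPi f u ≤ u := this.2
          _ < 2^(T+1) := by rw [pow_succ]; omega
        have : iu < T + 1 := (Nat.pow_lt_pow_iff_right one_lt_two).mp hlt
        rw [hiu]
        exact pow_dvd_pow 2 (by omega)
      have keylem : ∀ γ, γ < 2^c → f u γ = f j γ := by
        intro γ hγ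
        have hjγ : f j γ < j := blt f hbl j γ hj1
        have hfix : f p (f j γ) = f j γ := hjmin _ (by omega)
        rcases Nat.lt_or_ge γ j with hγj | hγj
        · have hfixγ : f p γ = γ := hjmin _ hγj
          have hh := bhom f hbl p j γ
          rw [hfix, fpj, hfixγ] at hh
          exact hh.symm
        · have hfpγ : f p γ = γ + 2^T := by
            rcases Nat.eq_or_lt_of_le hγj with h | h
            · rw [← h]; exact fpj
            · rcases cand γ with hh | hh
              · exfalso
                have := bz3 f hbl p hp1 j γ h (by omega)
                rw [fpj, hh, Nat.mod_eq_of_lt (by omega)] at this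
                omega
              · rw [Nat.mod_eq_of_lt (by omega)] at hh; exact hh
          have hh := bhom f hbl p j γ
          rw [hfix, fpj, hfpγ] at hh
          have hper : f u (γ + 2^T) = f u γ := by
            rw [bz6' f hbl u hu1 (γ + 2^T), bz6' f hbl u hu1 γ]
            congr 1
            obtain ⟨t, ht⟩ := hPiu
            rw [ht, Nat.add_mul_mod_self_left]
          rw [hper] at hh
          exact hh.symm
      rcases Nat.eq_or_lt_of_le hj1 with hj1' | hj1'
      · -- j = 1
        have h11 : f 1 1 = 0 := by
          have := blt f hbl 1 1 le_rfl
          omega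
        have hk1 := keylem 1 (by omega)
        rw [← hj1', h11] at hk1
        have hdd : bPi f u ∣ 1 := (bz1 f hbl u hu1 1).mp hk1
        have hPiu1 : bPi f u = 1 := Nat.dvd_one.mp hdd
        have := bPi1 f hbl u hu1 hPiu1
        omega
      · -- j ≥ 2
        have hPij := bPi_pos f hbl j hj1
        have hz : f u (bPi f j) = 0 := by
          rw [keylem (bPi f j) (by omega)]
          exact (bz1 f hbl j hj1 _).mpr dvd_rfl
        have hd : bPi f u ∣ bPi f j := (bz1 f hbl u hu1 _).mp hz
        have hle2 : bPi f u ≤ bPi f j := Nat.le_of_dvd (by omega) hd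
        have h4u := bz4 f hbl u hu1
        have hkey2 := keylem (bPi f u - 1) (by omega)
        rw [h4u] at hkey2
        have := blt f hbl j (bPi f u - 1) hj1
        omega
  -- Step B : bPi f p ≤ 2^(c+1)
  have stepB : bPi f p ≤ 2^(c+1) := by
    by_contra hgt
    have hv1 : f p (2^c) = 2^T := by
      have hne : f p (2^c) ≠ 0 := by
        intro h0
        have := (bz1 f hbl p hp1 (2^c)).mp h0
        have := Nat.le_of_dvd (by omega) this
        omega
      rcases cand (2^c) with h | h <;> rw [Nat.mod_self] at h <;> omega
    have hv2 : f p (2^(c+1)) = 2^T := by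
      have hne : f p (2^(c+1)) ≠ 0 := by
        intro h0
        have := (bz1 f hbl p hp1 (2^(c+1))).mp h0
        have := Nat.le_of_dvd (by omega) this
        omega
      rcases cand (2^(c+1)) with h | h <;>
        rw [show (2:ℕ)^(c+1) % 2^c = 0 from by
          rw [pow_succ, Nat.mul_mod_right]] at h <;> omega
    have := bz3 f hbl p hp1 (2^c) (2^(c+1)) (by
      have : (2:ℕ)^c < 2^(c+1) := Nat.pow_lt_pow_right one_lt_two (by omega)
      omega) (by omega)
    omega
  -- conclude
  have hgt : 2^c < bPi f p := by omega
  rw [hi] at hgt stepB ⊢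
  have h1 : c < i := (Nat.pow_lt_pow_iff_right one_lt_two).mp hgt
  have h2 : i ≤ c + 1 := by
    by_contra hcc
    have : (2:ℕ)^(c+2) ≤ 2^i := Nat.pow_le_pow_right (by norm_num) (by omega)
    have : (2:ℕ)^(c+1) < 2^(c+2) := Nat.pow_lt_pow_right one_lt_two (by omega)
    omega
  congr 1
  omega

lemma bX : ∀ p k, f p (2^k) = 0 ∨ ∃ l, k ≤ l ∧ f p (2^k) = 2^l := by
  intro p
  induction p using Nat.strong_induction_on with
  | _ p ih =>
    intro k
    rcases Nat.eq_zero_or_pos p with hp0 | hp1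
    · subst hp0
      exact Or.inr ⟨k, le_rfl, b0 f hbl (2^k)⟩
    by_cases ha0 : f p (2^k) = 0
    · exact Or.inl ha0
    right
    have hkpos : (1:ℕ) ≤ 2^k := Nat.one_le_two_pow
    have halt : f p (2^k) < p := blt f hbl p (2^k) hp1
    have hak : f p (2^k) % 2^k = 0 := by
      rw [bmod f hbl p (2^k) k, Nat.mod_self, bz f hbl (p % 2^k)]
    have hdvd : 2^k ∣ f p (2^k) := Nat.dvd_of_mod_eq_zero hak
    have hage : 2^k ≤ f p (2^k) := Nat.le_of_dvd (by omega) hdvd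
    set T := Nat.log 2 (f p (2^k)) with hTdef
    have hT1 : 2^T ≤ f p (2^k) := Nat.pow_log_le_self 2 ha0
    have hT2 : f p (2^k) < 2^(T+1) := Nat.lt_pow_succ_log_self (by norm_num) _
    have hTp : (2:ℕ)^(T+1) = 2^T * 2 := pow_succ 2 T
    rcases Nat.lt_or_ge k T with hkT | hkT
    · -- k < T
      have hkTlt : (2:ℕ)^k < 2^T := Nat.pow_lt_pow_right one_lt_two hkT
      have ha' : f p (2^k) % 2^T = f (p % 2^T) (2^k) := by
        rw [bmod f hbl p (2^k) T, Nat.mod_eq_of_lt hkTlt]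
      have hmlt : p % 2^T < 2^T := Nat.mod_lt _ (by omega)
      rcases ih (p % 2^T) (by omega) k with h0 | ⟨l1, hl1k, hl1⟩
      · refine ⟨T, by omega, ?_⟩
        rw [h0] at ha'
        obtain ⟨t, ht⟩ := Nat.dvd_of_mod_eq_zero ha'
        rcases Nat.lt_or_ge t 2 with htc | htc
        · interval_cases t <;> omega
        · have : 2^T * 2 ≤ 2^T * t := Nat.mul_le_mul_left _ htc
          omega
      · exfalso
        rw [hl1] at ha'
        have hl1T : l1 < T := by
          have : (2:ℕ)^l1 < 2^T := by
            rw [← hl1]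
            have := Nat.mod_lt (f p (2^k)) (show 0 < 2^T from by omega)
            omega
          exact (Nat.pow_lt_pow_iff_right one_lt_two).mp this
        have hm : f p (2^k) % 2^T = f p (2^k) - 2^T := by
          conv_lhs => rw [show f p (2^k) = 2^T*1 + (f p (2^k) - 2^T) from by omega]
          rw [Nat.mul_add_mod, Nat.mod_eq_of_lt (by omega)]
        have haval : f p (2^k) = 2^T + 2^l1 := by omega
        have hh : f (f p (2^k)) (f p (2^k)) = 0 := by
          have hb := bhom f hbl p (2^k) (2^k)
          rw [bL6 f hbl k (2^k), Nat.mod_self, bz f hbl p] at hb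
          exact hb.symm
        have hPia : bPi f (f p (2^k)) ∣ f p (2^k) :=
          (bz1 f hbl (f p (2^k)) (by omega) _).mp hh
        have hM := btwo f hbl T l1 hl1T
        rw [haval, hM] at hPia
        have hd1 : (2:ℕ)^(l1+1) ∣ 2^T := pow_dvd_pow 2 (by omega)
        have hd2 : (2:ℕ)^(l1+1) ∣ 2^l1 := (Nat.dvd_add_right hd1).mp hPia
        have := Nat.le_of_dvd (by positivity) hd2
        have : (2:ℕ)^l1 < 2^(l1+1) := Nat.pow_lt_pow_right one_lt_two (by omega)
        omega
    · -- k ≥ T : f p (2^k) = 2^k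
      refine ⟨k, le_rfl, ?_⟩
      have h1 : (2:ℕ)^(T+1) ≤ 2^(k+1) := Nat.pow_le_pow_right (by norm_num) (by omega)
      have h2 : (2:ℕ)^(k+1) = 2^k * 2 := pow_succ 2 k
      obtain ⟨t, ht⟩ := hdvd
      rcases Nat.lt_or_ge t 2 with htc | htc
      · interval_cases t <;> omega
      · have : 2^k * 2 ≤ 2^k * t := Nat.mul_le_mul_left _ htc
        omega

end BSide


/-- let π be the period of p, the smallest power of 2 which is a period
of q ↦ p * q. Then for any k with 2^k < π there exists l ≥ k with p * 2^k = 2^l. -/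
theorem backLaver_period_pow_two (bstar : ℕ → ℕ → ℕ) (hb : IsBackLaver bstar) :
    ∀ p π : ℕ, (∃ j, π = 2 ^ j) →
      (∀ q, bstar p (q + π) = bstar p q) →
      (∀ s, (∃ j, s = 2 ^ j) → (∀ q, bstar p (q + s) = bstar p q) → π ≤ s) →
      ∀ k, 2 ^ k < π → ∃ l, k ≤ l ∧ bstar p (2 ^ k) = 2 ^ l := by
  intro p π hpow hper hmin k hk
  obtain ⟨j, hj⟩ := hpow
  have hπ1 : 1 ≤ π := by rw [hj]; exact Nat.one_le_two_pow
  rcases Nat.eq_zero_or_pos p with hp0 | hp1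
  · exfalso
    subst hp0
    have := hper 0
    rw [b0 bstar hb (0 + π), b0 bstar hb 0] at this
    omega
  -- bPi bstar p = π
  have h1 : bPi bstar p ∣ π := by
    refine (bz1 bstar hb p hp1 π).mp ?_
    have := hper 0
    rw [Nat.zero_add, bz bstar hb p] at this
    exact this
  have h2 : π ≤ bPi bstar p :=
    hmin (bPi bstar p) (bz2 bstar hb p hp1) (bz6 bstar hb p hp1)
  have h3 : bPi bstar p = π := Nat.le_antisymm (Nat.le_of_dvd (by omega) h1) h2
  have hane : bstar p (2^k) ≠ 0 := by
    intro h0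
    have := Nat.le_of_dvd (by positivity) ((bz1 bstar hb p hp1 (2^k)).mp h0)
    omega
  rcases bX bstar hb p k with h | h
  · exact absurd h hane
  · exact h
end

section
/- Let * be the backwards Laver operation on nonnegative integers. For n > m ≥ 0 and p = 2^m + 2^n: the period of p is 2^{m+1}, and for all q < 2^m, p * q = q and p * (q + 2^m) = q + 2^n. -/
namespace BLav

def rowOf (N : ℕ) (above : ℕ → ℕ → ℕ) (p : ℕ) : ℕ → ℕ
  | 0 => N
  | q+1 => above (rowOf N above p q) (p+1)

def tbl (N : ℕ) : ℕ → ℕ → ℕ → ℕ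
  | 0 => fun _ q => q
  | k+1 => fun r q => if N - k ≤ r then tbl N k r q else rowOf N (tbl N k) r q

def S (N p q : ℕ) : ℕ := tbl N N p q

lemma tbl_id {N r : ℕ} (h : N ≤ r) : ∀ k q, tbl N k r q = q := by
  intro k
  induction k with
  | zero => intro q; rfl
  | succ k ih =>
    intro q
    simp only [tbl, if_pos (le_trans (Nat.sub_le N k) h)]
    exact ih q

lemma tbl_stab {N : ℕ} : ∀ k' k r, k ≤ k' → N - k ≤ r → tbl N k' r = tbl N k r := by
  intro k'
  induction k' with
  | zero => intro k r hk _; interval_cases k; rfl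
  | succ k' ih =>
    intro k r hk hr
    rcases Nat.lt_or_ge k (k'+1) with h | h
    · have hk' : k ≤ k' := Nat.lt_succ_iff.mp h
      funext q
      simp only [tbl, if_pos (le_trans (Nat.sub_le_sub_left hk' N) hr)]
      exact congrFun (ih k r hk' hr) q
    · have : k = k' + 1 := le_antisymm hk h
      subst this; rfl

lemma S_id {N r : ℕ} (h : N ≤ r) (q : ℕ) : S N r q = q := tbl_id h N q

lemma S_eq_row {N p : ℕ} (h : p < N) :
    S N p = rowOf N (tbl N (N - p - 1)) p := by
  have h1 : N - p = (N - p - 1) + 1 := by omega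
  have h2 : tbl N N p = tbl N (N - p) p := tbl_stab N (N - p) p (Nat.sub_le N p) (by omega)
  funext q
  show tbl N N p q = _
  rw [h2, h1]
  simp only [tbl]
  rw [if_neg (by omega)]
  simp

lemma S_zero {N p : ℕ} (h : p < N) : S N p 0 = N := by
  rw [S_eq_row h]; rfl

lemma S_succ {N p q : ℕ} (h : p < N) (h2 : p < S N p q) :
    S N p (q+1) = S N (S N p q) (p+1) := by
  have hst : tbl N N (S N p q) = tbl N (N - p - 1) (S N p q) :=
    tbl_stab N (N - p - 1) (S N p q) (by omega) (by omega)
  conv_lhs => rw [S_eq_row h]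
  show tbl N (N - p - 1) (rowOf N (tbl N (N - p - 1)) p q) (p+1) = _
  rw [← S_eq_row h]
  show _ = tbl N N (S N p q) (p+1)
  rw [hst]

lemma S_bound {N : ℕ} : ∀ v p, p < N → N - p ≤ v → ∀ q, p < S N p q ∧ S N p q ≤ N := by
  intro v
  induction v with
  | zero => intro p h hv; omega
  | succ v ih =>
    intro p h hv q
    induction q with
    | zero => rw [S_zero h]; omega
    | succ q ihq =>
      rw [S_succ h ihq.1]
      rcases Nat.lt_or_ge (S N p q) N with hr | hr
      · have := ih (S N p q) hr (by omega) (p+1)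
        omega
      · have : S N p q = N := le_antisymm ihq.2 hr
        rw [this, S_id (le_refl N)]
        omega

lemma S_gt {N p : ℕ} (h : p < N) (q : ℕ) : p < S N p q :=
  (S_bound (N - p) p h (le_refl _) q).1

lemma S_le {N p : ℕ} (h : p < N) (q : ℕ) : S N p q ≤ N :=
  (S_bound (N - p) p h (le_refl _) q).2

lemma S_succ' {N p q : ℕ} (h : p < N) :
    S N p (q+1) = S N (S N p q) (p+1) := S_succ h (S_gt h q)

lemma S_one {N p : ℕ} (h : p < N) : S N p 1 = p + 1 := by
  have := S_succ' (q := 0) h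
  rw [S_zero h, S_id (le_refl N)] at this
  exact this

-- per development
lemma per_exists {N p : ℕ} (h : p < N) : ∃ t, 0 < t ∧ S N p t = N := by
  by_contra hc
  push_neg at hc
  have key : ∀ j, 1 ≤ j → p + j ≤ S N p j := by
    intro j
    induction j with
    | zero => omega
    | succ j ih =>
      intro _
      rcases Nat.lt_or_ge j 1 with hj | hj
      · have : j = 0 := by omega
        subst this
        rw [S_one h]
      · have h1 := ih hj
        have h2 : S N p j < N :=
          lt_of_le_of_ne (S_le h j) (hc j (by omega))
        rw [S_succ' h]
        have := S_gt h2 (p+1)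
        omega
  have := key N (by omega)
  have := S_le h N
  have := hc N (by omega)
  omega

open scoped Classical in
noncomputable def per (N p : ℕ) : ℕ :=
  if h : ∃ t, 0 < t ∧ S N p t = N then Nat.find h else 1

open scoped Classical in
lemma per_pos {N p : ℕ} (h : p < N) : 0 < per N p := by
  rw [per, dif_pos (per_exists h)]
  exact (Nat.find_spec (per_exists h)).1

open scoped Classical in
lemma per_hit {N p : ℕ} (h : p < N) : S N p (per N p) = N := by
  rw [per, dif_pos (per_exists h)]
  exact (Nat.find_spec (per_exists h)).2

open scoped Classical in
lemma per_lt_hit {N p i : ℕ} (h : p < N) (h1 : 1 ≤ i) (h2 : i < per N p) :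
    S N p i < N := by
  rw [per, dif_pos (per_exists h)] at h2
  have := Nat.find_min (per_exists h) h2
  push_neg at this
  exact lt_of_le_of_ne (S_le h i) (this h1)

lemma per_min {N p t : ℕ} (h : p < N) (h1 : 0 < t) (h2 : S N p t = N) :
    per N p ≤ t := by
  by_contra hc
  have := per_lt_hit h h1 (by omega)
  omega

lemma per_le {N p : ℕ} (h : p < N) : p + per N p ≤ N := by
  have key : ∀ j, 1 ≤ j → j ≤ per N p → p + j ≤ S N p j := by
    intro j
    induction j with
    | zero => omega
    | succ j ih =>
      intro _ hle
      rcases Nat.lt_or_ge j 1 with hj | hj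
      · have : j = 0 := by omega
        subst this
        rw [S_one h]
      · have h1 := ih hj (by omega)
        have h2 : S N p j < N := per_lt_hit h hj (by omega)
        rw [S_succ' h]
        have := S_gt h2 (p+1)
        omega
  have := key (per N p) (per_pos h) (le_refl _)
  rw [per_hit h] at this
  exact this

lemma S_mono_step {N p u : ℕ} (h : p < N) (hu : 1 ≤ u) (hlt : S N p u < N) :
    S N p u < S N p (u+1) := by
  rw [S_succ' h]
  exact S_gt hlt (p+1)

lemma S_mono {N p : ℕ} (h : p < N) : ∀ u v, 1 ≤ u → u < v → v ≤ per N p →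
    S N p u < S N p v := by
  intro u v hu huv hv
  induction v with
  | zero => omega
  | succ v ih =>
    rcases Nat.lt_or_ge u v with h1 | h1
    · have := ih h1 (by omega)
      have h2 : S N p v < N := per_lt_hit h (by omega) (by omega)
      have := S_mono_step h (by omega) h2
      omega
    · have : u = v := by omega
      subst this
      have h2 : S N p u < N := per_lt_hit h hu (by omega)
      exact S_mono_step h hu h2

lemma S_periodic {N p : ℕ} (h : p < N) (x : ℕ) :
    S N p (x + per N p) = S N p x := by
  induction x with
  | zero => simpa [S_zero h] using per_hit h
  | succ x ih =>
    have : x + 1 + per N p = (x + per N p) + 1 := by omega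
    rw [this, S_succ' h, ih, ← S_succ' h]

lemma S_period_mul {N p : ℕ} (h : p < N) (j x : ℕ) :
    S N p (x + j * per N p) = S N p x := by
  induction j with
  | zero => simp
  | succ j ih =>
    have : x + (j+1) * per N p = (x + j * per N p) + per N p := by ring
    rw [this, S_periodic h, ih]

lemma S_hit_iff {N p x : ℕ} (h : p < N) : S N p x = N ↔ per N p ∣ x := by
  constructor
  · intro hx
    by_contra hc
    have h1 : x % per N p ≠ 0 := fun h0 => hc (Nat.dvd_of_mod_eq_zero h0)
    have h2 : x % per N p < per N p := Nat.mod_lt _ (per_pos h)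
    have h3 : S N p x = S N p (x % per N p) := by
      conv_lhs => rw [← Nat.mod_add_div' x (per N p), S_period_mul h]
    rw [hx] at h3
    have := per_lt_hit h (by omega) h2
    omega
  · rintro ⟨j, rfl⟩
    have : per N p * j = 0 + j * per N p := by ring
    rw [this, S_period_mul h, S_zero h]

lemma colOne {N p c : ℕ} (h : p < N) (hc : per N p ∣ c) :
    S N p (1 + c) = p + 1 := by
  obtain ⟨j, rfl⟩ := hc
  have : per N p * j = j * per N p := by ring
  rw [this, S_period_mul h, S_one h]
lemma row0_mod {H : ℕ} (hH : 0 < H) : ∀ q, S H 0 q % H = q % H := by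
  intro q
  induction q with
  | zero => rw [S_zero hH]; simp
  | succ q ih =>
    rw [S_succ' hH]
    have hb1 := S_gt hH q
    have hb2 := S_le hH q
    have hmd := Nat.mod_add_div q H
    rcases Nat.lt_or_ge (S H 0 q) H with hr | hr
    · rw [S_one hr]
      have hmq : q % H < H := Nat.mod_lt _ hH
      have hme : S H 0 q % H = S H 0 q := Nat.mod_eq_of_lt hr
      have h1 : q + 1 = (S H 0 q + 1) + H * (q / H) := by omega
      rw [h1, Nat.add_mul_mod_self_left]
    · have hEq : S H 0 q = H := by omega
      rw [hEq, S_id (le_refl H)]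
      have h0 : q % H = 0 := by
        rw [← ih, hEq, Nat.mod_self]
      have h1 : q + 1 = 1 + H * (q / H) := by omega
      rw [h1, Nat.add_mul_mod_self_left]

lemma reduce {H : ℕ} (hH : 0 < H) (hLC : ∀ p, p < H → S H p H = H) :
    ∀ d p, 2*H - p ≤ d → p < 2*H → ∀ q, S (2*H) p q % H = S H (p % H) q % H := by
  intro d
  induction d with
  | zero => intro p h1 h2; omega
  | succ d ih =>
    intro p hd hp q
    have hp' : p % H < H := Nat.mod_lt _ hH
    have hmd := Nat.mod_add_div p H
    induction q with
    | zero =>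
      rw [S_zero hp, S_zero hp']
      simp [Nat.mul_mod_right]
    | succ q ihq =>
      have hbr1 : p < S (2*H) p q := S_gt hp q
      have hbr2 : S (2*H) p q ≤ 2*H := S_le hp q
      have hbr1' : p % H < S H (p % H) q := S_gt hp' q
      have hbr2' : S H (p % H) q ≤ H := S_le hp' q
      rw [S_succ' hp, S_succ' hp']
      rcases Nat.lt_or_ge (S (2*H) p q) (2*H) with hrlt | hrge
      · rw [ih (S (2*H) p q) (by omega) hrlt (p+1)]
        rcases Nat.lt_or_ge (S H (p % H) q) H with hr'lt | hr'ge
        · have e1 : S H (p % H) q % H = S H (p % H) q := Nat.mod_eq_of_lt hr'lt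
          have hrmod : S (2*H) p q % H = S H (p % H) q := by omega
          rw [hrmod]
          congr 1
          have hper : per H (S H (p % H) q) ∣ H := by
            rw [← S_hit_iff hr'lt]
            exact hLC _ hr'lt
          obtain ⟨e, he⟩ := hper
          have h2 : (p / H * e) * per H (S H (p % H) q) = (p / H) * (per H (S H (p % H) q) * e) := by
            ring
          rw [← he] at h2
          have h3 : p + 1 = (p % H + 1) + (p / H * e) * per H (S H (p % H) q) := by
            have h4 : (p/H) * H = H * (p/H) := by ring
            omega
          rw [h3, S_period_mul hr'lt]
        · have hr'eq : S H (p % H) q = H := by omega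
          have e1 : H % H = 0 := Nat.mod_self H
          rw [hr'eq] at ihq
          have hrmod : S (2*H) p q % H = 0 := by omega
          rw [hrmod, hr'eq, S_id (le_refl H), row0_mod hH (p+1)]
          have h1 : p + 1 = (p % H + 1) + H * (p / H) := by omega
          rw [h1, Nat.add_mul_mod_self_left]
      · have hreq : S (2*H) p q = 2*H := by omega
        have hrmodH : S (2*H) p q % H = 0 := by rw [hreq]; simp [Nat.mul_mod_right]
        have e1 : H % H = 0 := Nat.mod_self H
        have hr'eq : S H (p % H) q = H := by
          rcases eq_or_lt_of_le hbr2' with h | h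
          · exact h
          · exfalso
            have := Nat.mod_eq_of_lt h
            omega
        rw [hreq, hr'eq, S_id (le_refl (2*H)), S_id (le_refl H)]
        have h1 : p + 1 = (p % H + 1) + H * (p / H) := by omega
        rw [h1, Nat.add_mul_mod_self_left]
lemma eq_H_of {H v : ℕ} (hH : 0 < H) (h1 : v % H = 0) (h2 : 0 < v) (h3 : v < 2*H) :
    v = H := by
  obtain ⟨c, rfl⟩ := Nat.dvd_of_mod_eq_zero h1
  have hc1 : 1 ≤ c := by
    rcases Nat.eq_zero_or_pos c with h | h
    · subst h; simp at h2
    · exact h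
  have hc2 : c < 2 := by
    by_contra hc
    push_neg at hc
    have : H * 2 ≤ H * c := Nat.mul_le_mul_left H hc
    omega
  have : c = 1 := by omega
  subst this; simp

lemma eq_2H_of {H v : ℕ} (hH : 0 < H) (h1 : v % H = 0) (h2 : H < v) (h3 : v ≤ 2*H) :
    v = 2*H := by
  obtain ⟨c, rfl⟩ := Nat.dvd_of_mod_eq_zero h1
  have hc1 : 2 ≤ c := by
    by_contra hc
    push_neg at hc
    interval_cases c <;> omega
  have hc2 : c ≤ 2 := by
    by_contra hc
    push_neg at hc
    have : H * 3 ≤ H * c := Nat.mul_le_mul_left H hc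
    omega
  have : c = 2 := by omega
  subst this; ring

lemma hit_modH {H : ℕ} (hH : 0 < H) (hLC : ∀ p, p < H → S H p H = H) {p : ℕ}
    (hp : p < 2*H) (x : ℕ) : S (2*H) p x % H = 0 ↔ per H (p % H) ∣ x := by
  have hp' : p % H < H := Nat.mod_lt _ hH
  rw [reduce hH hLC (2*H - p) p (le_refl _) hp x]
  constructor
  · intro h
    rw [← S_hit_iff hp']
    exact eq_H_of hH h (by have := S_gt hp' x; omega) (by have := S_le hp' x; omega)
  · intro h
    rw [(S_hit_iff hp').mpr h, Nat.mod_self]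

lemma per_double {H : ℕ} (hH : 0 < H) (hLC : ∀ p, p < H → S H p H = H) {p : ℕ}
    (hp : p < 2*H) :
    per (2*H) p = per H (p % H) ∨
    (per (2*H) p = 2 * per H (p % H) ∧ S (2*H) p (per H (p % H)) = H) := by
  have hp' : p % H < H := Nat.mod_lt _ hH
  have ht'pos : 0 < per H (p % H) := per_pos hp'
  have htpos : 0 < per (2*H) p := per_pos hp
  have hdvd : per H (p % H) ∣ per (2*H) p := by
    rw [← hit_modH hH hLC hp]
    rw [per_hit hp]
    simp [Nat.mul_mod_right]
  rcases Nat.lt_or_ge (S (2*H) p (per H (p % H))) (2*H) with hlt | hge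
  · right
    have hmid : S (2*H) p (per H (p % H)) = H := by
      apply eq_H_of hH
      · rw [hit_modH hH hLC hp]
      · have := S_gt hp (per H (p % H)); omega
      · exact hlt
    have htne : per (2*H) p ≠ per H (p % H) := by
      intro h
      rw [← h] at hmid
      rw [per_hit hp] at hmid
      omega
    have h2le : 2 * per H (p % H) ≤ per (2*H) p := by
      obtain ⟨c, hc⟩ := hdvd
      have : 2 ≤ c := by
        by_contra hcon
        push_neg at hcon
        interval_cases c <;> omega
      calc 2 * per H (p % H) = per H (p % H) * 2 := by ring
      _ ≤ per H (p % H) * c := Nat.mul_le_mul_left _ this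
      _ = per (2*H) p := hc.symm
    have hbig : S (2*H) p (2 * per H (p % H)) = 2*H := by
      apply eq_2H_of hH
      · rw [hit_modH hH hLC hp]; exact ⟨2, by ring⟩
      · have hmono := S_mono hp (per H (p % H)) (2 * per H (p % H)) ht'pos (by omega) h2le
        omega
      · exact S_le hp _
    have := per_min hp (by omega) hbig
    exact ⟨le_antisymm this h2le, hmid⟩
  · left
    have heq : S (2*H) p (per H (p % H)) = 2*H := le_antisymm (S_le hp _) hge
    have h1 := per_min hp ht'pos heq
    exact le_antisymm h1 (Nat.le_of_dvd htpos hdvd)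

lemma per_double_dvd {H : ℕ} (hH : 0 < H) (hLC : ∀ p, p < H → S H p H = H) {p : ℕ}
    (hp : p < 2*H) : per (2*H) p ∣ 2 * per H (p % H) := by
  rcases per_double hH hLC hp with h | h
  · rw [h]; exact ⟨2, by ring⟩
  · rw [h.1]

lemma per_nodouble {H : ℕ} (hH : 0 < H) (hLC : ∀ p, p < H → S H p H = H) {p : ℕ}
    (hp : p < 2*H) (hge : H ≤ p) : per (2*H) p = per H (p % H) := by
  rcases per_double hH hLC hp with h | h
  · exact h
  · exfalso
    have := S_gt hp (per H (p % H))
    omega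

lemma lastcol : ∀ ℓ p, p < 2^ℓ → S (2^ℓ) p (2^ℓ) = 2^ℓ := by
  intro ℓ
  induction ℓ with
  | zero =>
    intro p hp
    interval_cases p
    have h01 : (0:ℕ) < 1 := by norm_num
    have := S_succ' (N := 1) (p := 0) (q := 0) h01
    rw [S_zero h01, S_id (le_refl 1)] at this
    simpa using this
  | succ ℓ ih =>
    intro p hp
    have hH : 0 < 2^ℓ := Nat.pow_pos (by norm_num)
    have h2 : (2:ℕ)^(ℓ+1) = 2 * 2^ℓ := by ring
    rw [h2] at hp ⊢
    have hp' : p % 2^ℓ < 2^ℓ := Nat.mod_lt _ hH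
    rw [S_hit_iff hp]
    have hd1 : per (2*2^ℓ) p ∣ 2 * per (2^ℓ) (p % 2^ℓ) := per_double_dvd hH ih hp
    have hd2 : per (2^ℓ) (p % 2^ℓ) ∣ 2^ℓ := by
      rw [← S_hit_iff hp']
      exact ih _ hp'
    exact hd1.trans (mul_dvd_mul_left 2 hd2)

lemma per_dvd_pow {ℓ p : ℕ} (hp : p < 2^ℓ) : per (2^ℓ) p ∣ 2^ℓ := by
  rw [← S_hit_iff hp]
  exact lastcol ℓ p hp

lemma dvd_pow_of_lt {t a b : ℕ} (h1 : t ∣ 2^a) (h2 : t < 2^(b+1)) : t ∣ 2^b := by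
  obtain ⟨i, hi, rfl⟩ := (Nat.dvd_prime_pow Nat.prime_two).mp h1
  have : i < b + 1 := by
    have := (Nat.pow_lt_pow_iff_right (by norm_num : 1 < 2)).mp h2
    omega
  exact pow_dvd_pow 2 (by omega)

lemma laver_axioms (ℓ : ℕ) : LaverAxioms (2^ℓ) (S (2^ℓ)) := by
  have hN : 0 < 2^ℓ := Nat.pow_pos (by norm_num)
  refine ⟨?_, ?_, ?_⟩
  · intro p q hp hq
    simp only [Set.mem_Icc] at *
    rcases Nat.lt_or_ge p (2^ℓ) with h | h
    · have h1 := S_gt h q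
      have h2 := S_le h q
      omega
    · have : p = 2^ℓ := by omega
      subst this
      rw [S_id (le_refl _)]
      exact hq
  · intro p hp
    simp only [Set.mem_Icc] at hp
    rcases Nat.lt_or_ge p (2^ℓ) with h | h
    · rw [S_one h, Nat.mod_eq_of_lt h]
    · have : p = 2^ℓ := by omega
      subst this
      rw [S_id (le_refl _), Nat.mod_self]
  · intro p q hp hq
    simp only [Set.mem_Icc] at hp hq
    rcases Nat.lt_or_ge q (2^ℓ) with hqlt | hqge
    · rw [S_one hqlt]
      rcases Nat.lt_or_ge p (2^ℓ) with hplt | hpge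
      · rw [S_one hplt, S_succ' hplt]
      · have : p = 2^ℓ := by omega
        subst this
        rw [S_id (le_refl _), S_id (le_refl _), S_id (le_refl _), S_one hqlt]
    · have : q = 2^ℓ := by omega
      subst this
      rw [S_id (le_refl _)]
      have hlast : S (2^ℓ) p (2^ℓ) = 2^ℓ := by
        rcases Nat.lt_or_ge p (2^ℓ) with hplt | hpge
        · exact lastcol ℓ p hplt
        · have : p = 2^ℓ := by omega
          subst this
          exact S_id (le_refl _) _
      rw [hlast, S_id (le_refl _)]

lemma lin {ℓ n : ℕ} (h : n < ℓ) :
    ∀ y, 1 ≤ y → y ≤ 2^n → S (2^ℓ) (2^ℓ - 2^n) y = 2^ℓ - 2^n + y := by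
  have hn : 0 < 2^n := Nat.pow_pos (by norm_num)
  have hnl : 2^n < 2^ℓ := Nat.pow_lt_pow_right (by norm_num) h
  have hrow : 2^ℓ - 2^n < 2^ℓ := by omega
  intro y
  induction y with
  | zero => omega
  | succ y ih =>
    intro _ hy2
    rcases Nat.lt_or_ge y 1 with h0 | h0
    · have : y = 0 := by omega
      subst this
      rw [S_one hrow]
    · have hy2' : y ≤ 2^n := by omega
      rw [S_succ' hrow, ih h0 hy2']
      have hw1 : 1 ≤ 2^n - y := by omega
      have hw2 : 2^n - y < 2^n := by omega
      have hrw : 2^ℓ - 2^n + y = 2^ℓ - (2^n - y) := by omega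
      rw [hrw]
      have hrowv : 2^ℓ - (2^n - y) < 2^ℓ := by omega
      have hper1 : per (2^ℓ) (2^ℓ - (2^n - y)) ∣ 2^ℓ := per_dvd_pow hrowv
      have hper2 : per (2^ℓ) (2^ℓ - (2^n - y)) ≤ 2^n - y := by
        have := per_le hrowv
        omega
      have hn1 : 1 ≤ n := by
        by_contra hc
        push_neg at hc
        interval_cases n
        · simp at hy2
          omega
      have hper3 : per (2^ℓ) (2^ℓ - (2^n - y)) ∣ 2^(n-1) := by
        apply dvd_pow_of_lt hper1
        have he : n - 1 + 1 = n := by omega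
        rw [he]
        omega
      have hdvdcol : per (2^ℓ) (2^ℓ - (2^n - y)) ∣ 2^ℓ - 2^n := by
        apply Nat.dvd_sub
        · exact hper3.trans (pow_dvd_pow 2 (by omega))
        · exact hper3.trans (pow_dvd_pow 2 (by omega))
      have hcol : 2^ℓ - 2^n + 1 = 1 + (2^ℓ - 2^n) := by omega
      rw [hcol, colOne hrowv hdvdcol]
      omega

lemma lin_per {ℓ n : ℕ} (h : n < ℓ) : per (2^ℓ) (2^ℓ - 2^n) = 2^n := by
  have hn : 0 < 2^n := Nat.pow_pos (by norm_num)
  have hnl : 2^n < 2^ℓ := Nat.pow_lt_pow_right (by norm_num) h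
  have hrow : 2^ℓ - 2^n < 2^ℓ := by omega
  have hhit : S (2^ℓ) (2^ℓ - 2^n) (2^n) = 2^ℓ := by
    rw [lin h (2^n) hn (le_refl _)]
    omega
  have hle : per (2^ℓ) (2^ℓ - 2^n) ≤ 2^n := per_min hrow hn hhit
  rcases Nat.lt_or_ge (per (2^ℓ) (2^ℓ - 2^n)) (2^n) with hlt | hge
  · exfalso
    have hp := per_pos hrow
    have := per_hit hrow
    rw [lin h _ hp (by omega)] at this
    omega
  · omega

lemma pi_low {ℓ m w : ℕ} (hw1 : 1 ≤ w) (hw2 : w < 2^m) (hwK : w < 2^ℓ) :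
    per (2^ℓ) (2^ℓ - w) ∣ 2^m := by
  have hrow : 2^ℓ - w < 2^ℓ := by omega
  have hper1 : per (2^ℓ) (2^ℓ - w) ∣ 2^ℓ := per_dvd_pow hrow
  have hper2 : per (2^ℓ) (2^ℓ - w) ≤ w := by
    have := per_le hrow
    omega
  have hm : 1 ≤ m := by
    by_contra hc
    push_neg at hc
    interval_cases m <;> omega
  have h3 : per (2^ℓ) (2^ℓ - w) ∣ 2^(m-1) := by
    apply dvd_pow_of_lt hper1
    have he : m - 1 + 1 = m := by omega
    rw [he]
    omega
  exact h3.trans (pow_dvd_pow 2 (by omega))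

lemma pi_stab {ℓ v : ℕ} (h1 : 1 ≤ v) (h2 : v ≤ 2^ℓ) :
    per (2^(ℓ+1)) (2^(ℓ+1) - v) = per (2^ℓ) (2^ℓ - v) := by
  have hH : 0 < 2^ℓ := Nat.pow_pos (by norm_num)
  have h2p : (2:ℕ)^(ℓ+1) = 2 * 2^ℓ := by ring
  have hmod : (2*2^ℓ - v) % 2^ℓ = 2^ℓ - v := by
    have he : 2*2^ℓ - v = 2^ℓ + (2^ℓ - v) := by omega
    rw [he, Nat.add_mod_left, Nat.mod_eq_of_lt (by omega)]
  have := per_nodouble hH (lastcol ℓ) (p := 2*2^ℓ - v) (by omega) (by omega)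
  rw [h2p, this, hmod]

lemma pi_stab' {ℓ v : ℕ} (h1 : 1 ≤ v) (h2 : v ≤ 2^ℓ) :
    ∀ ℓ', ℓ ≤ ℓ' → per (2^ℓ') (2^ℓ' - v) = per (2^ℓ) (2^ℓ - v) := by
  intro ℓ'
  induction ℓ' with
  | zero =>
    intro h
    have : ℓ = 0 := by omega
    subst this; rfl
  | succ ℓ' ih =>
    intro h
    rcases Nat.lt_or_ge ℓ (ℓ'+1) with hlt | hge
    · have hle : ℓ ≤ ℓ' := by omega
      have hv2 : v ≤ 2^ℓ' := le_trans h2 (Nat.pow_le_pow_right (by norm_num) hle)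
      rw [pi_stab h1 hv2, ih hle]
    · have : ℓ = ℓ' + 1 := by omega
      subst this; rfl

lemma pi_gap {m n ℓ v : ℕ} (h1 : 1 ≤ v) (h2 : v < 2^m) (hmn : m < n) (hnl : n < ℓ) :
    per (2^ℓ) (2^ℓ - (2^n + v)) ∣ 2^m := by
  have hm0 : 0 < 2^m := Nat.pow_pos (by norm_num)
  have hn0 : 0 < 2^n := Nat.pow_pos (by norm_num)
  have hmn2 : 2^m ≤ 2^n := Nat.pow_le_pow_right (by norm_num) (le_of_lt hmn)
  have hv2n : v < 2^n := by omega
  have hw1 : 1 ≤ 2^n + v := by omega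
  have hw2 : 2^n + v ≤ 2^(n+1) := by
    have : (2:ℕ)^(n+1) = 2*2^n := by ring
    omega
  have hstab := pi_stab' hw1 hw2 ℓ (by omega)
  rw [hstab]
  have h2p : (2:ℕ)^(n+1) = 2 * 2^n := by ring
  rw [h2p]
  have hmod : (2*2^n - (2^n + v)) % 2^n = 2^n - v := by
    have he : 2*2^n - (2^n + v) = 2^n - v := by omega
    rw [he, Nat.mod_eq_of_lt (by omega)]
  have hdd := per_double_dvd hn0 (lastcol n) (p := 2*2^n - (2^n + v)) (by omega)
  rw [hmod] at hdd
  -- per (2^n) (2^n - v) divides 2^(m-1)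
  have hrowv : 2^n - v < 2^n := by omega
  have hq1 : per (2^n) (2^n - v) ∣ 2^n := per_dvd_pow hrowv
  have hq2 : per (2^n) (2^n - v) ≤ v := by
    have := per_le hrowv
    omega
  have hm1 : 1 ≤ m := by
    by_contra hc
    push_neg at hc
    interval_cases m <;> omega
  have hq3 : per (2^n) (2^n - v) ∣ 2^(m-1) := by
    apply dvd_pow_of_lt hq1
    have he : m - 1 + 1 = m := by omega
    rw [he]
    omega
  have hfin : 2 * per (2^n) (2^n - v) ∣ 2^m := by
    obtain ⟨c, hc⟩ := hq3
    refine ⟨c, ?_⟩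
    have he : m = (m-1) + 1 := by omega
    rw [he, pow_succ, hc]
    ring
  exact hdd.trans hfin

lemma rowA {m n ℓ : ℕ} (hmn : m < n) (hnl : n < ℓ) :
    ∀ u, 1 ≤ u → u ≤ 2^(m+1) →
      S (2^ℓ) (2^ℓ - (2^m + 2^n)) u =
        if u ≤ 2^m then 2^ℓ - (2^m + 2^n) + u else 2^ℓ - 2^(m+1) + u := by
  have hm0 : 0 < 2^m := Nat.pow_pos (by norm_num)
  have hn0 : 0 < 2^n := Nat.pow_pos (by norm_num)
  have hmn2 : 2^m < 2^n := Nat.pow_lt_pow_right (by norm_num) hmn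
  have hnK : 2^n < 2^ℓ := Nat.pow_lt_pow_right (by norm_num) hnl
  have hm1n : 2^(m+1) ≤ 2^n := Nat.pow_le_pow_right (by norm_num) (by omega)
  have hm1e : (2:ℕ)^(m+1) = 2*2^m := by ring
  have hnK2 : 2^n + 2^n ≤ 2^ℓ := by
    have : (2:ℕ)^(n+1) ≤ 2^ℓ := Nat.pow_le_pow_right (by norm_num) (by omega)
    have h2 : (2:ℕ)^(n+1) = 2*2^n := by ring
    omega
  have hPK : 2^m + 2^n < 2^ℓ := by omega
  have hrow : 2^ℓ - (2^m + 2^n) < 2^ℓ := by omega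
  -- divisibility of the column shift: 2^m divides 2^ℓ - (2^m + 2^n)
  have hcoldvd : (2:ℕ)^m ∣ 2^ℓ - (2^m + 2^n) := by
    apply Nat.dvd_sub
    · exact pow_dvd_pow 2 (by omega)
    · exact Nat.dvd_add (dvd_refl _) (pow_dvd_pow 2 (by omega))
  intro u
  induction u with
  | zero => omega
  | succ u ih =>
    intro _ hu2
    rcases Nat.lt_or_ge u 1 with h0 | h0
    · have : u = 0 := by omega
      subst this
      rw [S_one hrow, if_pos (by omega)]
    · have hu2' : u ≤ 2^(m+1) := by omega
      rw [S_succ' hrow, ih h0 hu2']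
      rcases Nat.lt_or_ge u (2^m) with hA | hBC
      · -- case A : u < 2^m
        rw [if_pos (le_of_lt hA)]
        have hv1 : 1 ≤ 2^m - u := by omega
        have hv2 : 2^m - u < 2^m := by omega
        have hrw : 2^ℓ - (2^m + 2^n) + u = 2^ℓ - (2^n + (2^m - u)) := by omega
        rw [hrw]
        have hrowv : 2^ℓ - (2^n + (2^m - u)) < 2^ℓ := by omega
        have hper : per (2^ℓ) (2^ℓ - (2^n + (2^m - u))) ∣ 2^m :=
          pi_gap hv1 hv2 hmn hnl
        have hdvdcol : per (2^ℓ) (2^ℓ - (2^n + (2^m - u))) ∣ 2^ℓ - (2^m + 2^n) :=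
          hper.trans hcoldvd
        have hcol : 2^ℓ - (2^m + 2^n) + 1 = 1 + (2^ℓ - (2^m + 2^n)) := by omega
        rw [hcol, colOne hrowv hdvdcol, if_pos (by omega)]
        omega
      · rcases Nat.lt_or_ge u (2^m + 1) with hB | hC
        · -- case B : u = 2^m
          have hueq : u = 2^m := by omega
          subst hueq
          rw [if_pos (le_refl _)]
          have hrw : 2^ℓ - (2^m + 2^n) + 2^m = 2^ℓ - 2^n := by omega
          rw [hrw]
          -- column rewrite: 2^ℓ - (2^m + 2^n) + 1 = (2^n - 2^m + 1) + j * 2^n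
          have hKsplit : (2:ℕ)^ℓ = 2^n * 2^(ℓ-n) := by
            rw [← pow_add]
            congr 1
            omega
          have hj2 : 2 ≤ 2^(ℓ-n) := by
            have : (2:ℕ)^1 ≤ 2^(ℓ-n) := Nat.pow_le_pow_right (by norm_num) (by omega)
            simpa using this
          have hjmul : (2^(ℓ-n) - 2) * 2^n = 2^ℓ - 2*2^n := by
            rw [Nat.sub_mul, mul_comm, ← hKsplit]
          have hcol : 2^ℓ - (2^m + 2^n) + 1 = (2^n - 2^m + 1) + (2^(ℓ-n) - 2) * 2^n := by
            omega
          have hrown : 2^ℓ - 2^n < 2^ℓ := by omega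
          have hpm := S_period_mul hrown (2^(ℓ-n) - 2) (2^n - 2^m + 1)
          rw [lin_per hnl] at hpm
          rw [hcol, hpm, lin hnl (2^n - 2^m + 1) (by omega) (by omega),
            if_neg (by omega)]
          omega
        · -- case C : 2^m < u
          rw [if_neg (by omega)]
          have hw1 : 1 ≤ 2^(m+1) - u := by omega
          have hw2 : 2^(m+1) - u < 2^m := by omega
          have hrw : 2^ℓ - 2^(m+1) + u = 2^ℓ - (2^(m+1) - u) := by omega
          rw [hrw]
          have hrowv : 2^ℓ - (2^(m+1) - u) < 2^ℓ := by omega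
          have hper : per (2^ℓ) (2^ℓ - (2^(m+1) - u)) ∣ 2^m :=
            pi_low hw1 hw2 (by omega)
          have hdvdcol : per (2^ℓ) (2^ℓ - (2^(m+1) - u)) ∣ 2^ℓ - (2^m + 2^n) :=
            hper.trans hcoldvd
          have hcol : 2^ℓ - (2^m + 2^n) + 1 = 1 + (2^ℓ - (2^m + 2^n)) := by omega
          rw [hcol, colOne hrowv hdvdcol, if_neg (by omega)]
          omega

lemma perA {m n ℓ : ℕ} (hmn : m < n) (hnl : n < ℓ) :
    per (2^ℓ) (2^ℓ - (2^m + 2^n)) = 2^(m+1) := by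
  have hm0 : 0 < 2^m := Nat.pow_pos (by norm_num)
  have hn0 : 0 < 2^n := Nat.pow_pos (by norm_num)
  have hmn2 : 2^m < 2^n := Nat.pow_lt_pow_right (by norm_num) hmn
  have hnK : 2^n < 2^ℓ := Nat.pow_lt_pow_right (by norm_num) hnl
  have hm1n : 2^(m+1) ≤ 2^n := Nat.pow_le_pow_right (by norm_num) (by omega)
  have hm1e : (2:ℕ)^(m+1) = 2*2^m := by ring
  have hrow : 2^ℓ - (2^m + 2^n) < 2^ℓ := by omega
  have hhit : S (2^ℓ) (2^ℓ - (2^m + 2^n)) (2^(m+1)) = 2^ℓ := by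
    rw [rowA hmn hnl (2^(m+1)) (by omega) (le_refl _), if_neg (by omega)]
    omega
  have hle : per (2^ℓ) (2^ℓ - (2^m + 2^n)) ≤ 2^(m+1) := per_min hrow (by omega) hhit
  rcases Nat.lt_or_ge (per (2^ℓ) (2^ℓ - (2^m + 2^n))) (2^(m+1)) with hlt | hge
  · exfalso
    have hp := per_pos hrow
    have hh := per_hit hrow
    rw [rowA hmn hnl _ hp (by omega)] at hh
    rcases Nat.lt_or_ge (per (2^ℓ) (2^ℓ - (2^m + 2^n))) (2^m + 1) with h1 | h1
    · rw [if_pos (by omega)] at hh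
      omega
    · rw [if_neg (by omega)] at hh
      omega
  · omega

lemma hbs {bstar : ℕ → ℕ → ℕ} (hb : IsBackLaver bstar) {ℓ p q : ℕ}
    (hp : p < 2^ℓ) (hq : q < 2^ℓ) :
    bstar p q = 2^ℓ - S (2^ℓ) (2^ℓ - p) (2^ℓ - q) :=
  hb ℓ (S (2^ℓ)) (laver_axioms ℓ) p q hp hq

lemma part3 {bstar : ℕ → ℕ → ℕ} (hb : IsBackLaver bstar) {m n ℓ q : ℕ}
    (hmn : m < n) (hnl : n < ℓ) (hq : q < 2^m) :
    bstar (2^m + 2^n) q = q ∧ bstar (2^m + 2^n) (q + 2^m) = q + 2^n := by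
  have hm0 : 0 < 2^m := Nat.pow_pos (by norm_num)
  have hn0 : 0 < 2^n := Nat.pow_pos (by norm_num)
  have hmn2 : 2^m < 2^n := Nat.pow_lt_pow_right (by norm_num) hmn
  have hnK : 2^n < 2^ℓ := Nat.pow_lt_pow_right (by norm_num) hnl
  have hm1n : 2^(m+1) ≤ 2^n := Nat.pow_le_pow_right (by norm_num) (by omega)
  have hm1e : (2:ℕ)^(m+1) = 2*2^m := by ring
  have hnK2 : 2^n + 2^n ≤ 2^ℓ := by
    have h1 : (2:ℕ)^(n+1) ≤ 2^ℓ := Nat.pow_le_pow_right (by norm_num) (by omega)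
    have h2 : (2:ℕ)^(n+1) = 2*2^n := by ring
    omega
  have hPK : 2^m + 2^n < 2^ℓ := by omega
  have hrow : 2^ℓ - (2^m + 2^n) < 2^ℓ := by omega
  have hKsplit : (2:ℕ)^ℓ = 2^(m+1) * 2^(ℓ-(m+1)) := by
    rw [← pow_add]
    congr 1
    omega
  have hjmul : (2^(ℓ-(m+1)) - 1) * 2^(m+1) = 2^ℓ - 2^(m+1) := by
    rw [Nat.sub_mul, mul_comm, ← hKsplit, one_mul]
  constructor
  · have hcol : 2^ℓ - q = (2^(m+1) - q) + (2^(ℓ-(m+1)) - 1) * 2^(m+1) := by omega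
    have hpm := S_period_mul hrow (2^(ℓ-(m+1)) - 1) (2^(m+1) - q)
    rw [perA hmn hnl] at hpm
    rw [hbs hb hPK (by omega : q < 2^ℓ), hcol, hpm,
      rowA hmn hnl _ (by omega) (by omega), if_neg (by omega)]
    omega
  · have hcol : 2^ℓ - (q + 2^m) = (2^m - q) + (2^(ℓ-(m+1)) - 1) * 2^(m+1) := by omega
    have hpm := S_period_mul hrow (2^(ℓ-(m+1)) - 1) (2^m - q)
    rw [perA hmn hnl] at hpm
    rw [hbs hb hPK (by omega : q + 2^m < 2^ℓ), hcol, hpm,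
      rowA hmn hnl _ (by omega) (by omega), if_pos (by omega)]
    omega

lemma part1 {bstar : ℕ → ℕ → ℕ} (hb : IsBackLaver bstar) {m n : ℕ}
    (hmn : m < n) (q : ℕ) :
    bstar (2^m + 2^n) (q + 2^(m+1)) = bstar (2^m + 2^n) q := by
  set ℓ := max (n+1) (q + 2^(m+1)) with hldef
  have hnl : n < ℓ := by
    have := le_max_left (n+1) (q + 2^(m+1))
    omega
  have hqK : q + 2^(m+1) < 2^ℓ := by
    have h1 : q + 2^(m+1) < 2^(q + 2^(m+1)) := Nat.lt_two_pow_self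
    have h2 : (2:ℕ)^(q + 2^(m+1)) ≤ 2^ℓ :=
      Nat.pow_le_pow_right (by norm_num) (le_max_right _ _)
    omega
  have hm0 : 0 < 2^m := Nat.pow_pos (by norm_num)
  have hn0 : 0 < 2^n := Nat.pow_pos (by norm_num)
  have hmn2 : 2^m < 2^n := Nat.pow_lt_pow_right (by norm_num) hmn
  have hnK : 2^n < 2^ℓ := Nat.pow_lt_pow_right (by norm_num) hnl
  have hm1n : 2^(m+1) ≤ 2^n := Nat.pow_le_pow_right (by norm_num) (by omega)
  have hnK2 : 2^n + 2^n ≤ 2^ℓ := by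
    have h1 : (2:ℕ)^(n+1) ≤ 2^ℓ := Nat.pow_le_pow_right (by norm_num) (by omega)
    have h2 : (2:ℕ)^(n+1) = 2*2^n := by ring
    omega
  have hPK : 2^m + 2^n < 2^ℓ := by omega
  have hrow : 2^ℓ - (2^m + 2^n) < 2^ℓ := by omega
  rw [hbs hb hPK hqK, hbs hb hPK (by omega : q < 2^ℓ)]
  have hper := S_periodic hrow (2^ℓ - q - 2^(m+1))
  rw [perA hmn hnl] at hper
  have h1 : 2^ℓ - q - 2^(m+1) + 2^(m+1) = 2^ℓ - q := by omega
  have h2 : 2^ℓ - (q + 2^(m+1)) = 2^ℓ - q - 2^(m+1) := by omega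
  rw [h2, ← hper, h1]

end BLav


/-- for n > m ≥ 0 and p = 2^m + 2^n, the period of p (the smallest power
of 2 which is a period of q ↦ p * q) is 2^{m+1}; moreover for all q < 2^m one has
p * q = q and p * (q + 2^m) = q + 2^n. -/
theorem backLaver_two_powers_row (bstar : ℕ → ℕ → ℕ) (hb : IsBackLaver bstar) :
    ∀ m n : ℕ, m < n →
      (∀ q, bstar (2 ^ m + 2 ^ n) (q + 2 ^ (m + 1)) = bstar (2 ^ m + 2 ^ n) q) ∧
      (∀ s, (∃ j, s = 2 ^ j) → (∀ q, bstar (2 ^ m + 2 ^ n) (q + s) =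
          bstar (2 ^ m + 2 ^ n) q) → 2 ^ (m + 1) ≤ s) ∧
      (∀ q, q < 2 ^ m →
        bstar (2 ^ m + 2 ^ n) q = q ∧
        bstar (2 ^ m + 2 ^ n) (q + 2 ^ m) = q + 2 ^ n) := by
  intro m n hmn
  have hm0 : 0 < 2^m := Nat.pow_pos (by norm_num)
  have hn0 : 0 < 2^n := Nat.pow_pos (by norm_num)
  refine ⟨BLav.part1 hb hmn, ?_, fun q hq => BLav.part3 hb hmn (Nat.lt_succ_self n) hq⟩
  rintro s ⟨j, rfl⟩ hper
  by_contra hc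
  push_neg at hc
  have hjm : j ≤ m := by
    by_contra hjc
    push_neg at hjc
    have : (2:ℕ)^(m+1) ≤ 2^j := Nat.pow_le_pow_right (by norm_num) (by omega)
    omega
  have h0 : bstar (2^m + 2^n) 0 = 0 :=
    (BLav.part3 hb hmn (Nat.lt_succ_self n) hm0).1
  have hs := hper 0
  rw [zero_add, h0] at hs
  rcases Nat.lt_or_ge j m with hjlt | hjge
  · have : bstar (2^m + 2^n) (2^j) = 2^j :=
      (BLav.part3 hb hmn (Nat.lt_succ_self n)
        (Nat.pow_lt_pow_right (by norm_num) hjlt)).1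
    have hj0 : 0 < 2^j := Nat.pow_pos (by norm_num)
    omega
  · have hjeq : j = m := by omega
    subst hjeq
    have := (BLav.part3 hb hmn (Nat.lt_succ_self n) hm0).2
    rw [zero_add] at this
    omega
end
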